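/- arXiv:1608.03934 — 9 statements merged into one kernel-verified Lean document; each statement's English description precedes it below -/
import Mathlib

section
/- Let d ≥ 1, let 1 ≤ i ≤ d, let s = (s_1,…,s_d) be a sequence of positive integers with s_1 = s_2 = ⋯ = s_i and s_j < s_{j+1} for all i ≤ j ≤ d−1, and let k be a positive integer. Then P_d^{(s)} is Gorenstein of index k if and only if the sequence t = (k s_1, k s_2, …, k s_d) (which again satisfies t_1 = ⋯ = t_i and t_j < t_{j+1} for j ≥ i) has the property that P_d^{(t)} is translation equivalent to a reflexive polytope. -/
open Pointwise BigOperators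

/-- The `s`-lecture hall polytope
`P_d^(s) = {x ∈ ℝ^d : 0 ≤ x_1/s_1 ≤ x_2/s_2 ≤ ⋯ ≤ x_d/s_d ≤ 1}`
(indices shifted down by one: `x i` is the paper's `x_{i+1}`). -/
def lectureHall (d : ℕ) (s : Fin d → ℕ) : Set (Fin d → ℝ) :=
  {x | (∀ h : 0 < d, 0 ≤ x ⟨0, h⟩ / (s ⟨0, h⟩ : ℝ)) ∧
       (∀ i : Fin d, ∀ hi : (i : ℕ) + 1 < d,
          x i / (s i : ℝ) ≤ x ⟨(i : ℕ) + 1, hi⟩ / (s ⟨(i : ℕ) + 1, hi⟩ : ℝ)) ∧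
       (∀ h : 0 < d,
          x ⟨d - 1, Nat.sub_lt h Nat.one_pos⟩ / (s ⟨d - 1, Nat.sub_lt h Nat.one_pos⟩ : ℝ) ≤ 1)}

/-- The set of lattice points of `ℝ^d`. -/
def latticePoints (d : ℕ) : Set (Fin d → ℝ) := {x | ∀ i, ∃ n : ℤ, x i = (n : ℝ)}

/-- The dual polytope `Q^∨ = {y : ⟨x,y⟩ ≤ 1 for all x ∈ Q}`. -/
def dualPolytope {d : ℕ} (Q : Set (Fin d → ℝ)) : Set (Fin d → ℝ) :=
  {y | ∀ x ∈ Q, ∑ i, x i * y i ≤ 1}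

/-- A full-dimensional lattice polytope is reflexive if it is Fano (the only
lattice point of its interior is the origin) and its dual polytope is a lattice
polytope. -/
def IsReflexive {d : ℕ} (Q : Set (Fin d → ℝ)) : Prop :=
  interior Q ∩ latticePoints d = {0} ∧
  dualPolytope Q = convexHull ℝ (dualPolytope Q ∩ latticePoints d)

/-- Unimodular equivalence: `Q = f_U(P) + w` with `U` an integer matrix of
determinant `±1` and `w` an integer vector. -/
def UnimodularlyEquivalent {d : ℕ} (P Q : Set (Fin d → ℝ)) : Prop :=
  ∃ (U : Matrix (Fin d) (Fin d) ℤ) (w : Fin d → ℤ),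
    (U.det = 1 ∨ U.det = -1) ∧
    Q = (fun x => Matrix.vecMul x (U.map (fun a : ℤ => (a : ℝ))) + fun i => (w i : ℝ)) '' P

/-- `P` is Gorenstein of index `c`: `c` is the smallest positive integer such
that `cP` is unimodularly equivalent to a reflexive polytope. -/
def GorensteinOfIndex {d : ℕ} (P : Set (Fin d → ℝ)) (c : ℕ) : Prop :=
  0 < c ∧
  (∃ Q : Set (Fin d → ℝ), UnimodularlyEquivalent ((c : ℝ) • P) Q ∧ IsReflexive Q) ∧
  ∀ c' : ℕ, 0 < c' →
    (∃ Q : Set (Fin d → ℝ), UnimodularlyEquivalent ((c' : ℝ) • P) Q ∧ IsReflexive Q) →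
    c ≤ c'

/-- `P` is translation equivalent to a reflexive polytope. -/
def TranslationReflexive {d : ℕ} (P : Set (Fin d → ℝ)) : Prop :=
  ∃ w : Fin d → ℤ, IsReflexive ((fun x => x + fun i => (w i : ℝ)) '' P)

/-- With the conventions `e_0 = 0`, `s_0 = 1`, every position `0,…,d-1` of the
`s`-inversion sequence `e` is an ascent (`e i` is the paper's `e_{i+1}`). -/
def allAscents (d : ℕ) (s : Fin d → ℕ) (e : Fin d → ℤ) : Prop :=
  (∀ h : 0 < d, (0 : ℝ) / 1 < (e ⟨0, h⟩ : ℝ) / (s ⟨0, h⟩ : ℝ)) ∧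
  ∀ i : Fin d, ∀ hi : (i : ℕ) + 1 < d,
    (e i : ℝ) / (s i : ℝ) < (e ⟨(i : ℕ) + 1, hi⟩ : ℝ) / (s ⟨(i : ℕ) + 1, hi⟩ : ℝ)

/-- The integer decomposition property. -/
def HasIDP (d : ℕ) (P : Set (Fin d → ℝ)) : Prop :=
  ∀ k : ℕ, 0 < k → ∀ z : Fin d → ℤ,
    (fun i => (z i : ℝ)) ∈ (k : ℝ) • P →
    ∃ x : Fin k → Fin d → ℤ,
      (∀ j, (fun i => (x j i : ℝ)) ∈ P) ∧ ∀ i, (∑ j, x j i) = z i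

namespace Stmt8

variable {d : ℕ}

/-- Real matrix of an integer matrix. -/
noncomputable def rmap (V : Matrix (Fin d) (Fin d) ℤ) : Matrix (Fin d) (Fin d) ℝ :=
  V.map (fun a : ℤ => (a : ℝ))

lemma rmap_eq (V : Matrix (Fin d) (Fin d) ℤ) :
    rmap V = (Int.castRingHom ℝ).mapMatrix V := rfl

lemma rmap_mul (V W : Matrix (Fin d) (Fin d) ℤ) : rmap (V * W) = rmap V * rmap W := by
  simp [rmap_eq, map_mul]

lemma rmap_one : rmap (1 : Matrix (Fin d) (Fin d) ℤ) = 1 := by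
  simp [rmap_eq, map_one]

/-- cast commutes with vecMul. -/
lemma cast_vecMul (z : Fin d → ℤ) (V : Matrix (Fin d) (Fin d) ℤ) (i : Fin d) :
    ((Matrix.vecMul z V i : ℤ) : ℝ)
      = Matrix.vecMul (fun j => (z j : ℝ)) (rmap V) i := by
  simp [Matrix.vecMul, dotProduct, rmap, Matrix.map]

/-- existence of an integer two-sided inverse. -/
lemma exists_inv (U : Matrix (Fin d) (Fin d) ℤ) (h : U.det = 1 ∨ U.det = -1) :
    ∃ V : Matrix (Fin d) (Fin d) ℤ, U * V = 1 ∧ V * U = 1 := by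
  refine ⟨U.det • U.adjugate, ?_, ?_⟩
  · rw [Matrix.mul_smul, Matrix.mul_adjugate, smul_smul]
    rcases h with h | h <;> simp [h]
  · rw [Matrix.smul_mul, Matrix.adjugate_mul, smul_smul]
    rcases h with h | h <;> simp [h]

/-- The linear homeomorphism `x ↦ x ᵥ* V` for unimodular `V`. -/
noncomputable def vecMulHomeo (V W : Matrix (Fin d) (Fin d) ℤ)
    (h1 : V * W = 1) (h2 : W * V = 1) : (Fin d → ℝ) ≃ₜ (Fin d → ℝ) where
  toFun x := Matrix.vecMul x (rmap V)
  invFun x := Matrix.vecMul x (rmap W)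
  left_inv x := by simp only []; rw [Matrix.vecMul_vecMul, ← rmap_mul, h1, rmap_one, Matrix.vecMul_one]
  right_inv x := by show Matrix.vecMul (Matrix.vecMul x (rmap W)) (rmap V) = x; rw [Matrix.vecMul_vecMul, ← rmap_mul, h2, rmap_one, Matrix.vecMul_one]
  continuous_toFun := by
    simpa [Matrix.coe_vecMulLinear] using
      (LinearMap.continuous_of_finiteDimensional ((rmap (d := d) V).vecMulLinear))
  continuous_invFun := by
    simpa [Matrix.coe_vecMulLinear] using
      (LinearMap.continuous_of_finiteDimensional ((rmap (d := d) W).vecMulLinear))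

lemma vecMulHomeo_apply (V W : Matrix (Fin d) (Fin d) ℤ) (h1 h2) (x : Fin d → ℝ) :
    vecMulHomeo V W h1 h2 x = Matrix.vecMul x (rmap V) := rfl

/-- lattice points closed under unimodular maps plus integer translation -/
lemma lattice_map (V : Matrix (Fin d) (Fin d) ℤ) (w : Fin d → ℤ) {x : Fin d → ℝ}
    (hx : x ∈ latticePoints d) :
    (Matrix.vecMul x (rmap V) + fun i => (w i : ℝ)) ∈ latticePoints d := by
  choose n hn using hx
  intro i
  refine ⟨Matrix.vecMul n V i + w i, ?_⟩
  have : x = fun j => ((n j : ℤ) : ℝ) := funext hn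
  subst this
  push_cast
  rw [cast_vecMul]
  simp

lemma lattice_vecMul (V : Matrix (Fin d) (Fin d) ℤ) {x : Fin d → ℝ}
    (hx : x ∈ latticePoints d) : Matrix.vecMul x (rmap V) ∈ latticePoints d := by
  have h := lattice_map V 0 hx
  have h0 : (fun i : Fin d => (((0 : Fin d → ℤ) i : ℤ) : ℝ)) = 0 := by funext i; simp
  rwa [h0, add_zero] at h

lemma lattice_add (w : Fin d → ℤ) {x : Fin d → ℝ} (hx : x ∈ latticePoints d) :
    (x + fun i => (w i : ℝ)) ∈ latticePoints d := by
  intro i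
  obtain ⟨n, hn⟩ := hx i
  exact ⟨n + w i, by push_cast [Pi.add_apply, hn]; ring⟩

lemma lattice_zero : (0 : Fin d → ℝ) ∈ latticePoints d := fun i => ⟨0, by simp⟩


open Matrix in
lemma image_inter_lattice (V W : Matrix (Fin d) (Fin d) ℤ) (h1 : V * W = 1) (h2 : W * V = 1) (S : Set (Fin d → ℝ)) :
    (fun x => Matrix.vecMul x (rmap V)) '' (S ∩ latticePoints d)
      = ((fun x => Matrix.vecMul x (rmap V)) '' S) ∩ latticePoints d := by
  ext z
  constructor
  · rintro ⟨x, ⟨hxS, hxL⟩, rfl⟩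
    exact ⟨⟨x, hxS, rfl⟩, lattice_vecMul V hxL⟩
  · rintro ⟨⟨x, hxS, rfl⟩, hzL⟩
    refine ⟨x, ⟨hxS, ?_⟩, rfl⟩
    have := lattice_vecMul W hzL
    rwa [Matrix.vecMul_vecMul, ← rmap_mul, h1, rmap_one, Matrix.vecMul_one] at this

open Matrix in
lemma sum_vecMul_mul (M : Matrix (Fin d) (Fin d) ℝ) (x y : Fin d → ℝ) :
    ∑ i, Matrix.vecMul x M i * y i = ∑ j, x j * Matrix.vecMul y Mᵀ j := by
  simp only [Matrix.vecMul, dotProduct, Finset.sum_mul, Finset.mul_sum,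
    Matrix.transpose_apply]
  rw [Finset.sum_comm]
  apply Finset.sum_congr rfl
  intro j _
  apply Finset.sum_congr rfl
  intro i _
  ring

open Matrix in
lemma dual_image (V W : Matrix (Fin d) (Fin d) ℤ) (h1 : V * W = 1) (h2 : W * V = 1) (Q : Set (Fin d → ℝ)) :
    dualPolytope ((fun x => Matrix.vecMul x (rmap V)) '' Q)
      = (fun y => Matrix.vecMul y (rmap W)ᵀ) '' dualPolytope Q := by
  have hMN : rmap V * rmap W = 1 := by rw [← rmap_mul, h1, rmap_one]
  have hNM : rmap W * rmap V = 1 := by rw [← rmap_mul, h2, rmap_one]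
  ext y
  constructor
  · intro hy
    refine ⟨Matrix.vecMul y (rmap V)ᵀ, ?_, ?_⟩
    · intro x hx
      have := hy (Matrix.vecMul x (rmap V)) ⟨x, hx, rfl⟩
      rwa [sum_vecMul_mul] at this
    · show Matrix.vecMul (Matrix.vecMul y (rmap V)ᵀ) (rmap W)ᵀ = y
      rw [Matrix.vecMul_vecMul, ← Matrix.transpose_mul, hNM, Matrix.transpose_one,
        Matrix.vecMul_one]
  · rintro ⟨u, hu, rfl⟩
    rintro z ⟨x, hx, rfl⟩
    rw [sum_vecMul_mul, Matrix.vecMul_vecMul, ← Matrix.transpose_mul, hMN,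
      Matrix.transpose_one, Matrix.vecMul_one]
    exact hu x hx

open Matrix in
lemma isReflexive_image (V W : Matrix (Fin d) (Fin d) ℤ) (h1 : V * W = 1) (h2 : W * V = 1) {Q : Set (Fin d → ℝ)} (hQ : IsReflexive Q) :
    IsReflexive ((fun x => Matrix.vecMul x (rmap V)) '' Q) := by
  obtain ⟨hint, hdual⟩ := hQ
  constructor
  · have himg : (fun x => Matrix.vecMul x (rmap V)) '' interior Q
        = interior ((fun x => Matrix.vecMul x (rmap V)) '' Q) :=
      (vecMulHomeo V W h1 h2).image_interior Q
    rw [← himg]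
    ext z
    constructor
    · rintro ⟨⟨x, hx, rfl⟩, hzL⟩
      have hxL : x ∈ latticePoints d := by
        have := lattice_vecMul W hzL
        rwa [Matrix.vecMul_vecMul, ← rmap_mul, h1, rmap_one, Matrix.vecMul_one] at this
      have : x ∈ interior Q ∩ latticePoints d := ⟨hx, hxL⟩
      rw [hint] at this
      simp only [Set.mem_singleton_iff] at this
      subst this
      simp [Matrix.zero_vecMul]
    · intro hz
      simp only [Set.mem_singleton_iff] at hz
      subst hz
      have h0 : (0 : Fin d → ℝ) ∈ interior Q := by
        have : (0 : Fin d → ℝ) ∈ interior Q ∩ latticePoints d := by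
          rw [hint]; rfl
        exact this.1
      exact ⟨⟨0, h0, by simp [Matrix.zero_vecMul]⟩, lattice_zero⟩
  · rw [dual_image V W h1 h2]
    conv_lhs => rw [hdual]
    have hlin : IsLinearMap ℝ (fun y : Fin d → ℝ => Matrix.vecMul y (rmap W)ᵀ) := by
      constructor
      · intro a b; rw [Matrix.add_vecMul]
      · intro c a; rw [Matrix.smul_vecMul]
    rw [hlin.image_convexHull]
    have hii := image_inter_lattice Wᵀ Vᵀ
      (by rw [← Matrix.transpose_mul, h1, Matrix.transpose_one])
      (by rw [← Matrix.transpose_mul, h2, Matrix.transpose_one])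
      (dualPolytope Q)
    have hrt : rmap (d := d) Wᵀ = (rmap W)ᵀ := rfl
    rw [hrt] at hii
    rw [hii]


/-- From a unimodular equivalence to a reflexive polytope: the interior of `P`
contains a unique lattice point. -/
lemma interior_lattice_unique {P Q : Set (Fin d → ℝ)}
    (h : UnimodularlyEquivalent P Q) (hQ : IsReflexive Q) :
    ∃ p, p ∈ interior P ∩ latticePoints d ∧
      ∀ q ∈ interior P ∩ latticePoints d, q = p := by
  obtain ⟨U, w, hdet, rfl⟩ := h
  obtain ⟨V, h1, h2⟩ := exists_inv U hdet
  set cw : Fin d → ℝ := fun i => (w i : ℝ)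
  let H : (Fin d → ℝ) ≃ₜ (Fin d → ℝ) :=
    (vecMulHomeo U V h1 h2).trans (Homeomorph.addRight cw)
  have Happ : ∀ x, H x = Matrix.vecMul x (rmap U) + cw := fun x => rfl
  have Himg : H '' P = (fun x => Matrix.vecMul x (U.map (fun a : ℤ => (a : ℝ))) + cw) '' P := rfl
  have Hsymm : ∀ z, H.symm z = Matrix.vecMul (z - cw) (rmap V) := by
    intro z
    rfl
  have hintQ := hQ.1
  have hIm : H '' interior P = interior (H '' P) := H.image_interior P
  have h0Q : (0 : Fin d → ℝ) ∈ interior (H '' P) ∩ latticePoints d := by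
    rw [Himg, hintQ]; rfl
  refine ⟨H.symm 0, ⟨?_, ?_⟩, ?_⟩
  · obtain ⟨x, hx, hxe⟩ : (0 : Fin d → ℝ) ∈ ⇑H '' interior P := by rw [hIm]; exact h0Q.1
    have hx0 : H.symm 0 = x := by rw [← hxe, H.symm_apply_apply]
    rwa [hx0]
  · rw [Hsymm]
    have : ((0 : Fin d → ℝ) - cw) ∈ latticePoints d := by
      have := lattice_add (fun i => -w i) (lattice_zero (d := d))
      convert this using 1
      funext i
      simp [cw]
    exact lattice_vecMul V this
  · intro q hq
    have hHq : H q ∈ interior (H '' P) ∩ latticePoints d := by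
      refine ⟨?_, ?_⟩
      · rw [← hIm]; exact ⟨q, hq.1, rfl⟩
      · rw [Happ]; exact lattice_map U w hq.2
    rw [Himg, hintQ] at hHq
    simp only [Set.mem_singleton_iff] at hHq
    have : H.symm (H q) = H.symm 0 := by rw [hHq]
    rwa [H.symm_apply_apply] at this


lemma div_key (k m : ℕ) (a : ℝ) :
    ((k : ℝ)⁻¹ * a) / (m : ℝ) = a / ((k * m : ℕ) : ℝ) := by
  push_cast
  rw [mul_comm, ← div_eq_mul_inv, div_div]

lemma smul_lectureHall (k : ℕ) (hk : 0 < k) (s : Fin d → ℕ) :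
    (k : ℝ) • lectureHall d s = lectureHall d (fun j => k * s j) := by
  have hk0 : (k : ℝ) ≠ 0 := Nat.cast_ne_zero.2 hk.ne'
  ext x
  rw [Set.mem_smul_set_iff_inv_smul_mem₀ hk0]
  simp only [lectureHall, Set.mem_setOf_eq, Pi.smul_apply, smul_eq_mul, div_key]

lemma lectureHall_mono {c k : ℕ} (hc : 0 < c) (hck : c ≤ k) (s : Fin d → ℕ)
    (hpos : ∀ j, 0 < s j) :
    lectureHall d (fun j => c * s j) ⊆ lectureHall d (fun j => k * s j) := by
  have hk : 0 < k := lt_of_lt_of_le hc hck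
  have hc' : (0:ℝ) < c := Nat.cast_pos.2 hc
  have hk' : (0:ℝ) < k := Nat.cast_pos.2 hk
  have hck' : (c:ℝ) ≤ k := Nat.cast_le.2 hck
  intro x hx
  obtain ⟨h0, hchain, htop⟩ := hx
  have hs : ∀ j : Fin d, (0:ℝ) < s j := fun j => Nat.cast_pos.2 (hpos j)
  refine ⟨?_, ?_, ?_⟩
  · intro h
    have := h0 h
    simp only [Nat.cast_mul] at this ⊢
    have hx0 : 0 ≤ x ⟨0, h⟩ := by
      have hb : (0:ℝ) < (c:ℝ) * (s ⟨0, h⟩ : ℝ) := mul_pos hc' (hs _)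
      by_contra hneg
      push_neg at hneg
      have : x ⟨0, h⟩ / ((c:ℝ) * (s ⟨0, h⟩ : ℝ)) < 0 := div_neg_of_neg_of_pos hneg hb
      linarith
    positivity
  · intro i hi
    have h := hchain i hi
    simp only [Nat.cast_mul] at h ⊢
    set a := x i
    set b := x ⟨(i : ℕ) + 1, hi⟩
    set m := (s i : ℝ)
    set n := (s ⟨(i : ℕ) + 1, hi⟩ : ℝ)
    have hm : (0:ℝ) < m := hs i
    have hn : (0:ℝ) < n := hs _
    rw [div_le_div_iff₀ (by positivity) (by positivity)] at h ⊢
    have key : a * n ≤ b * m := by nlinarith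
    nlinarith [mul_le_mul_of_nonneg_left key hk'.le]
  · intro h
    have := htop h
    simp only [Nat.cast_mul] at this ⊢
    set a := x ⟨d - 1, Nat.sub_lt h Nat.one_pos⟩
    set m := (s ⟨d - 1, Nat.sub_lt h Nat.one_pos⟩ : ℝ)
    have hm : (0:ℝ) < m := hs _
    rw [div_le_one (by positivity)] at this ⊢
    nlinarith

lemma lectureHall_translate {c k : ℕ} (hc : 0 < c) (hck : c < k) (s : Fin d → ℕ)
    (hpos : ∀ j, 0 < s j) :
    (fun x => x + fun j => (((k - c) * s j : ℕ) : ℝ)) '' lectureHall d (fun j => c * s j)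
      ⊆ lectureHall d (fun j => k * s j) := by
  have hc' : (0:ℝ) < c := Nat.cast_pos.2 hc
  have hk' : (0:ℝ) < k := Nat.cast_pos.2 (hc.trans hck)
  have hs : ∀ j : Fin d, (0:ℝ) < s j := fun j => Nat.cast_pos.2 (hpos j)
  have hsub : ((k - c : ℕ) : ℝ) = (k:ℝ) - (c:ℝ) := by
    push_cast [Nat.cast_sub hck.le]; ring
  rintro z ⟨x, hx, rfl⟩
  obtain ⟨h0, hchain, htop⟩ := hx
  refine ⟨?_, ?_, ?_⟩
  · intro h
    have hh := h0 h
    simp only [Nat.cast_mul, Pi.add_apply] at hh ⊢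
    rw [hsub]
    have hx0 : 0 ≤ x ⟨0, h⟩ := by
      have hb : (0:ℝ) < (c:ℝ) * (s ⟨0, h⟩ : ℝ) := mul_pos hc' (hs _)
      by_contra hneg
      push_neg at hneg
      have : x ⟨0, h⟩ / ((c:ℝ) * (s ⟨0, h⟩ : ℝ)) < 0 := div_neg_of_neg_of_pos hneg hb
      linarith
    have : (0:ℝ) ≤ ((k:ℝ) - c) * (s ⟨0, h⟩ : ℝ) := by
      have : (0:ℝ) ≤ (k:ℝ) - c := by
        have : (c:ℝ) ≤ k := Nat.cast_le.2 hck.le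
        linarith
      positivity
    apply div_nonneg (by linarith) (by positivity)
  · intro i hi
    have h := hchain i hi
    simp only [Nat.cast_mul, Pi.add_apply] at h ⊢
    rw [hsub]
    set a := x i
    set b := x ⟨(i : ℕ) + 1, hi⟩
    set m := (s i : ℝ)
    set n := (s ⟨(i : ℕ) + 1, hi⟩ : ℝ)
    have hm : (0:ℝ) < m := hs i
    have hn : (0:ℝ) < n := hs _
    rw [div_le_div_iff₀ (by positivity) (by positivity)] at h ⊢
    have key : a * n ≤ b * m := by nlinarith
    nlinarith [mul_le_mul_of_nonneg_left key hk'.le, mul_pos hm hn]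
  · intro h
    have hh := htop h
    simp only [Nat.cast_mul, Pi.add_apply] at hh ⊢
    rw [hsub]
    set a := x ⟨d - 1, Nat.sub_lt h Nat.one_pos⟩
    set m := (s ⟨d - 1, Nat.sub_lt h Nat.one_pos⟩ : ℝ)
    have hm : (0:ℝ) < m := hs _
    rw [div_le_one (by positivity)] at hh ⊢
    nlinarith

end Stmt8

/-- for `s` constant on the first `i` entries and strictly
increasing afterwards and `k > 0`, `P_d^(s)` is Gorenstein of index `k` iff
`P_d^(k·s)` is translation equivalent to a reflexive polytope. -/
theorem stmt_8 (d i : ℕ) (hd : 0 < d) (hi1 : 1 ≤ i) (hid : i ≤ d)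
    (s : Fin d → ℕ) (hpos : ∀ j, 0 < s j)
    (hconst : ∀ j : Fin d, (j : ℕ) < i → s j = s ⟨0, hd⟩)
    (hinc : ∀ j : Fin d, ∀ hj : (j : ℕ) + 1 < d, i ≤ (j : ℕ) + 1 →
      s j < s ⟨(j : ℕ) + 1, hj⟩)
    (k : ℕ) (hk : 0 < k) :
    GorensteinOfIndex (lectureHall d s) k ↔
      TranslationReflexive (lectureHall d (fun j => k * s j)) := by
  have hsm := Stmt8.smul_lectureHall (d := d) k hk s
  constructor
  · rintro ⟨hk0, ⟨Q, ⟨U, w, hdet, hQeq⟩, hQrefl⟩, -⟩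
    obtain ⟨V, h1, h2⟩ := Stmt8.exists_inv U hdet
    refine ⟨Matrix.vecMul w V, ?_⟩
    have hrU : U.map (fun a : ℤ => (a : ℝ)) = Stmt8.rmap U := rfl
    rw [hrU] at hQeq
    have hfun : ∀ x : Fin d → ℝ,
        Matrix.vecMul (Matrix.vecMul x (Stmt8.rmap U) + fun i => (w i : ℝ)) (Stmt8.rmap V)
          = x + fun i => ((Matrix.vecMul w V i : ℤ) : ℝ) := by
      intro x
      rw [Matrix.add_vecMul, Matrix.vecMul_vecMul, ← Stmt8.rmap_mul, h1, Stmt8.rmap_one,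
        Matrix.vecMul_one]
      congr 1
      funext j
      exact (Stmt8.cast_vecMul w V j).symm
    have key : (fun x => x + fun i => ((Matrix.vecMul w V i : ℤ) : ℝ)) ''
          lectureHall d (fun j => k * s j)
        = (fun x => Matrix.vecMul x (Stmt8.rmap V)) '' Q := by
      rw [← hsm, hQeq, Set.image_image]
      exact Set.image_congr' (fun x => (hfun x).symm)
    rw [key]
    exact Stmt8.isReflexive_image V U h2 h1 hQrefl
  · rintro ⟨w, hrefl⟩
    have himg : (fun x => x + fun i => ((w i : ℤ) : ℝ)) '' lectureHall d (fun j => k * s j)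
        = (fun x => Matrix.vecMul x ((1 : Matrix (Fin d) (Fin d) ℤ).map (fun a : ℤ => (a : ℝ)))
            + fun i => (w i : ℝ)) '' ((k : ℝ) • lectureHall d s) := by
      rw [hsm]
      refine Set.image_congr' (fun x => ?_)
      rw [show ((1 : Matrix (Fin d) (Fin d) ℤ).map (fun a : ℤ => (a : ℝ)))
          = (1 : Matrix (Fin d) (Fin d) ℝ) from Stmt8.rmap_one, Matrix.vecMul_one]
    have hequivK : UnimodularlyEquivalent (lectureHall d (fun j => k * s j))
        ((fun x => x + fun i => ((w i : ℤ) : ℝ)) '' lectureHall d (fun j => k * s j)) := by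
      refine ⟨1, w, Or.inl Matrix.det_one, ?_⟩
      rw [himg, hsm]
    refine ⟨hk, ?_, ?_⟩
    · exact ⟨(fun x => x + fun i => ((w i : ℤ) : ℝ)) '' lectureHall d (fun j => k * s j),
        ⟨1, w, Or.inl Matrix.det_one, himg⟩, hrefl⟩
    · intro c' hc' hQ'
      obtain ⟨Q', hequiv', hrefl'⟩ := hQ'
      by_contra hlt
      push_neg at hlt
      rw [Stmt8.smul_lectureHall c' hc' s] at hequiv'
      obtain ⟨p, hpmem, hpuniq⟩ := Stmt8.interior_lattice_unique hequivK hrefl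
      obtain ⟨q, hqmem, -⟩ := Stmt8.interior_lattice_unique hequiv' hrefl'
      set v : Fin d → ℝ := fun j => (((k - c') * s j : ℕ) : ℝ) with hv
      have hq1 : q ∈ interior (lectureHall d fun j => k * s j) :=
        interior_mono (Stmt8.lectureHall_mono hc' hlt.le s hpos) hqmem.1
      have hq2 : q + v ∈ interior (lectureHall d fun j => k * s j) := by
        have hT : (fun x => x + v) '' interior (lectureHall d fun j => c' * s j)
            = interior ((fun x => x + v) '' (lectureHall d fun j => c' * s j)) :=
          (Homeomorph.addRight v).image_interior _
        have hmem : q + v ∈ interior ((fun x => x + v) '' (lectureHall d fun j => c' * s j)) := by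
          rw [← hT]; exact ⟨q, hqmem.1, rfl⟩
        exact interior_mono (Stmt8.lectureHall_translate hc' hlt s hpos) hmem
      have hvlat : q + v ∈ latticePoints d := by
        have : v = fun j => ((((k - c') * s j : ℕ) : ℤ) : ℝ) := by
          funext j; push_cast [hv]; ring
        rw [this]
        exact Stmt8.lattice_add _ hqmem.2
      have hpq1 : q = p := hpuniq q ⟨hq1, hqmem.2⟩
      have hpq2 : q + v = p := hpuniq (q + v) ⟨hq2, hvlat⟩
      have h0 : v ⟨0, hd⟩ = 0 := by
        have := congrFun (hpq2.trans hpq1.symm) ⟨0, hd⟩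
        simpa using this
      have hvpos : (0:ℝ) < v ⟨0, hd⟩ := by
        have : 0 < (k - c') * s ⟨0, hd⟩ :=
          Nat.mul_pos (Nat.sub_pos_of_lt hlt) (hpos _)
        rw [hv]
        simp only []
        exact_mod_cast this
      linarith
end

section
/- Let d ≥ 1 and let s = (s_1,…,s_d) be a sequence of positive integers with s_i ≤ s_{i+1} and s_{i+1} − s_i ≤ 1 for all 1 ≤ i ≤ d−1. The topological interior of P_d^{(s)} contains exactly one lattice point if and only if s_d = d + 1. Moreover, in this case the unique interior lattice point is the point p ∈ ℤ^d with p_j = j for all 1 ≤ j ≤ d. -/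
open Pointwise BigOperators

section Aux

/-- Characterization of integer points in the interior of the lecture hall
polytope via strict inequalities. -/
theorem int_interior_iff (d : ℕ) (hd : 0 < d) (s : Fin d → ℕ) (hpos : ∀ i, 0 < s i)
    (p : Fin d → ℤ) :
    (fun j => (p j : ℝ)) ∈ interior (lectureHall d s) ↔
      (0 < p ⟨0, hd⟩ ∧
       (∀ i : Fin d, ∀ hi : (i : ℕ) + 1 < d,
          p i * (s ⟨(i : ℕ) + 1, hi⟩ : ℤ) < p ⟨(i : ℕ) + 1, hi⟩ * (s i : ℤ)) ∧
       p ⟨d - 1, Nat.sub_lt hd Nat.one_pos⟩ < (s ⟨d - 1, Nat.sub_lt hd Nat.one_pos⟩ : ℤ)) := by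
  have hposR : ∀ i : Fin d, (0:ℝ) < (s i : ℝ) := fun i => by exact_mod_cast hpos i
  set x : Fin d → ℝ := fun j => (p j : ℝ) with hxdef
  have hxval : ∀ j, x j = (p j : ℝ) := fun _ => rfl
  constructor
  · intro hint
    have hnh : lectureHall d s ∈ nhds x := mem_interior_iff_mem_nhds.mp hint
    have tendsto_upd : ∀ i : Fin d,
        Filter.Tendsto (fun t : ℝ => Function.update x i (x i + t)) (nhds 0) (nhds x) := by
      intro i
      have hc : Continuous fun t : ℝ => Function.update x i (x i + t) :=
        continuous_const.update i (continuous_const.add continuous_id)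
      have h0 : Function.update x i (x i + 0) = x := by
        simp [Function.update_eq_self]
      have := hc.tendsto 0
      rwa [h0] at this
    have hev : ∀ i : Fin d, ∀ᶠ t in nhds (0:ℝ),
        Function.update x i (x i + t) ∈ lectureHall d s := by
      intro i
      exact (tendsto_upd i) hnh
    have pertPos : ∀ i : Fin d, ∃ t : ℝ, 0 < t ∧
        Function.update x i (x i + t) ∈ lectureHall d s := by
      intro i
      have h1 : ∀ᶠ t in nhdsWithin (0:ℝ) (Set.Ioi 0),
          Function.update x i (x i + t) ∈ lectureHall d s :=
        (hev i).filter_mono nhdsWithin_le_nhds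
      obtain ⟨t, h2, h3⟩ := (h1.and self_mem_nhdsWithin).exists
      exact ⟨t, h3, h2⟩
    have pertNeg : ∀ i : Fin d, ∃ t : ℝ, t < 0 ∧
        Function.update x i (x i + t) ∈ lectureHall d s := by
      intro i
      have h1 : ∀ᶠ t in nhdsWithin (0:ℝ) (Set.Iio 0),
          Function.update x i (x i + t) ∈ lectureHall d s :=
        (hev i).filter_mono nhdsWithin_le_nhds
      obtain ⟨t, h2, h3⟩ := (h1.and self_mem_nhdsWithin).exists
      exact ⟨t, h3, h2⟩
    refine ⟨?_, ?_, ?_⟩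
    · obtain ⟨t, ht, hmem⟩ := pertNeg ⟨0, hd⟩
      have h := hmem.1 hd
      rw [Function.update_self] at h
      have h2 : (0:ℝ) ≤ x ⟨0, hd⟩ + t := by
        by_contra hc
        push_neg at hc
        have : (x ⟨0, hd⟩ + t) / (s ⟨0, hd⟩ : ℝ) < 0 := div_neg_of_neg_of_pos hc (hposR _)
        linarith
      have h3 : (0:ℝ) < x ⟨0, hd⟩ := by linarith
      rw [hxval] at h3
      exact_mod_cast h3
    · intro i hi
      obtain ⟨t, ht, hmem⟩ := pertPos i
      have h := hmem.2.1 i hi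
      have hne : (⟨(i : ℕ) + 1, hi⟩ : Fin d) ≠ i := by
        intro hcon
        have := congrArg Fin.val hcon
        simp at this
      rw [Function.update_self, Function.update_of_ne hne] at h
      have h2 : (x i + t) * (s ⟨(i : ℕ) + 1, hi⟩ : ℝ) ≤ x ⟨(i : ℕ) + 1, hi⟩ * (s i : ℝ) :=
        (div_le_div_iff₀ (hposR i) (hposR _)).mp h
      have h3 : x i * (s ⟨(i : ℕ) + 1, hi⟩ : ℝ) < x ⟨(i : ℕ) + 1, hi⟩ * (s i : ℝ) := by
        nlinarith [mul_pos ht (hposR ⟨(i : ℕ) + 1, hi⟩)]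
      rw [hxval, hxval] at h3
      exact_mod_cast h3
    · obtain ⟨t, ht, hmem⟩ := pertPos ⟨d - 1, Nat.sub_lt hd Nat.one_pos⟩
      have h := hmem.2.2 hd
      rw [Function.update_self] at h
      have h2 : x ⟨d - 1, Nat.sub_lt hd Nat.one_pos⟩ + t ≤ (s ⟨d - 1, Nat.sub_lt hd Nat.one_pos⟩ : ℝ) :=
        (div_le_one (hposR _)).mp h
      have h3 : x ⟨d - 1, Nat.sub_lt hd Nat.one_pos⟩ < (s ⟨d - 1, Nat.sub_lt hd Nat.one_pos⟩ : ℝ) := by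
        linarith
      rw [hxval] at h3
      exact_mod_cast h3
  · rintro ⟨h0, hmid, hlast⟩
    have hx0 : (0:ℝ) < x ⟨0, hd⟩ / (s ⟨0, hd⟩ : ℝ) :=
      div_pos (by rw [hxval]; exact_mod_cast h0) (hposR _)
    have hxm : ∀ i : Fin d, ∀ hi : (i : ℕ) + 1 < d,
        x i / (s i : ℝ) < x ⟨(i : ℕ) + 1, hi⟩ / (s ⟨(i : ℕ) + 1, hi⟩ : ℝ) := by
      intro i hi
      rw [div_lt_div_iff₀ (hposR i) (hposR _), hxval, hxval]
      exact_mod_cast hmid i hi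
    have hxl : x ⟨d - 1, Nat.sub_lt hd Nat.one_pos⟩ / (s ⟨d - 1, Nat.sub_lt hd Nat.one_pos⟩ : ℝ) < 1 :=
      (div_lt_one (hposR _)).mpr (by rw [hxval]; exact_mod_cast hlast)
    apply mem_interior.mpr
    refine ⟨({y : Fin d → ℝ | 0 < y ⟨0, hd⟩ / (s ⟨0, hd⟩ : ℝ)} ∩
        (⋂ i : Fin d, {y : Fin d → ℝ | ∀ hi : (i : ℕ) + 1 < d,
          y i / (s i : ℝ) < y ⟨(i : ℕ) + 1, hi⟩ / (s ⟨(i : ℕ) + 1, hi⟩ : ℝ)})) ∩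
        {y : Fin d → ℝ | y ⟨d - 1, Nat.sub_lt hd Nat.one_pos⟩ /
          (s ⟨d - 1, Nat.sub_lt hd Nat.one_pos⟩ : ℝ) < 1}, ?_, ?_, ?_⟩
    · rintro y ⟨⟨hy0, hym⟩, hyl⟩
      refine ⟨fun _ => le_of_lt hy0, fun i hi => le_of_lt (Set.mem_iInter.mp hym i hi), fun _ => le_of_lt hyl⟩
    · apply IsOpen.inter
      apply IsOpen.inter
      · exact isOpen_lt continuous_const ((continuous_apply _).div_const _)
      · apply isOpen_iInter_of_finite
        intro i
        by_cases hi : (i : ℕ) + 1 < d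
        · have he : {y : Fin d → ℝ | ∀ hi' : (i : ℕ) + 1 < d,
              y i / (s i : ℝ) < y ⟨(i : ℕ) + 1, hi'⟩ / (s ⟨(i : ℕ) + 1, hi'⟩ : ℝ)} =
              {y : Fin d → ℝ | y i / (s i : ℝ) < y ⟨(i : ℕ) + 1, hi⟩ / (s ⟨(i : ℕ) + 1, hi⟩ : ℝ)} := by
            ext y
            exact ⟨fun h => h hi, fun h _ => h⟩
          rw [he]
          exact isOpen_lt ((continuous_apply _).div_const _) ((continuous_apply _).div_const _)
        · have he : ∀ y : Fin d → ℝ, y ∈ {y : Fin d → ℝ | ∀ hi' : (i : ℕ) + 1 < d,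
              y i / (s i : ℝ) < y ⟨(i : ℕ) + 1, hi'⟩ / (s ⟨(i : ℕ) + 1, hi'⟩ : ℝ)} :=
            fun y hi' => absurd hi' hi
          rw [Set.eq_univ_of_forall he]
          exact isOpen_univ
      · exact isOpen_lt ((continuous_apply _).div_const _) continuous_const
    · exact ⟨⟨hx0, Set.mem_iInter.mpr fun i => hxm i⟩, hxl⟩

/-- Lower bound lemma: the `s`-monotonicity of `s` forces `p n ≥ n + 1`. -/
theorem lower_bd (d : ℕ) (hd : 0 < d) (s : Fin d → ℕ) (hpos : ∀ i, 0 < s i)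
    (hstep : ∀ i : Fin d, ∀ hi : (i : ℕ) + 1 < d,
      s i ≤ s ⟨(i : ℕ) + 1, hi⟩ ∧ s ⟨(i : ℕ) + 1, hi⟩ - s i ≤ 1)
    (p : Fin d → ℤ)
    (h0 : 0 < p ⟨0, hd⟩)
    (hmid : ∀ i : Fin d, ∀ hi : (i : ℕ) + 1 < d,
      p i * (s ⟨(i : ℕ) + 1, hi⟩ : ℤ) < p ⟨(i : ℕ) + 1, hi⟩ * (s i : ℤ)) :
    ∀ n, ∀ h : n < d, ((n : ℕ) : ℤ) + 1 ≤ p ⟨n, h⟩ := by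
  intro n
  induction n with
  | zero =>
    intro h
    have h0' : 0 < p ⟨0, h⟩ := h0
    simp only [Nat.cast_zero, zero_add]
    omega
  | succ n ih =>
    intro h
    have hn : n < d := by omega
    have ihn := ih hn
    have hm : p ⟨n, hn⟩ * (s ⟨n + 1, h⟩ : ℤ) < p ⟨n + 1, h⟩ * (s ⟨n, hn⟩ : ℤ) := hmid ⟨n, hn⟩ h
    have hs : s ⟨n, hn⟩ ≤ s ⟨n + 1, h⟩ := (hstep ⟨n, hn⟩ h).1
    have hsZ : ((s ⟨n, hn⟩ : ℕ) : ℤ) ≤ ((s ⟨n + 1, h⟩ : ℕ) : ℤ) := by exact_mod_cast hs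
    have hu0 : (0:ℤ) < ((s ⟨n, hn⟩ : ℕ) : ℤ) := by exact_mod_cast hpos ⟨n, hn⟩
    have ha0 : (0:ℤ) ≤ p ⟨n, hn⟩ := by
      have : (0:ℤ) ≤ ((n : ℕ) : ℤ) := Int.natCast_nonneg n
      linarith
    have h1 : p ⟨n, hn⟩ * (s ⟨n, hn⟩ : ℤ) ≤ p ⟨n, hn⟩ * (s ⟨n + 1, h⟩ : ℤ) :=
      mul_le_mul_of_nonneg_left hsZ ha0
    have h2 : p ⟨n, hn⟩ * (s ⟨n, hn⟩ : ℤ) < p ⟨n + 1, h⟩ * (s ⟨n, hn⟩ : ℤ) :=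
      lt_of_le_of_lt h1 hm
    have h3 : p ⟨n, hn⟩ < p ⟨n + 1, h⟩ := lt_of_mul_lt_mul_right h2 (le_of_lt hu0)
    push_cast
    push_cast at ihn
    linarith

/-- Weak increase with steps at most 1 gives `s l ≤ s j + (l - j)`. -/
theorem s_lb (d : ℕ) (s : Fin d → ℕ)
    (hstep : ∀ i : Fin d, ∀ hi : (i : ℕ) + 1 < d,
      s i ≤ s ⟨(i : ℕ) + 1, hi⟩ ∧ s ⟨(i : ℕ) + 1, hi⟩ - s i ≤ 1) :
    ∀ l j, ∀ hl : l < d, ∀ hj : j < d, j ≤ l → s ⟨l, hl⟩ ≤ s ⟨j, hj⟩ + (l - j) := by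
  intro l
  induction l with
  | zero =>
    intro j hl hj hjl
    obtain rfl : j = 0 := Nat.le_zero.mp hjl
    simp
  | succ l ih =>
    intro j hl hj hjl
    rcases Nat.eq_or_lt_of_le hjl with rfl | hjl'
    · simp
    · have hld : l < d := by omega
      have h1 : s ⟨l, hld⟩ ≤ s ⟨l + 1, hl⟩ := (hstep ⟨l, hld⟩ hl).1
      have h2 : s ⟨l + 1, hl⟩ - s ⟨l, hld⟩ ≤ 1 := (hstep ⟨l, hld⟩ hl).2
      have h3 := ih j hld hj (by omega)
      omega

/-- Upper bound: if `s_(d-1) = d + 1` then `p n ≤ n + 1`, downward induction. -/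
theorem upper_bd (d : ℕ) (hd : 0 < d) (s : Fin d → ℕ) (hpos : ∀ i, 0 < s i)
    (hstep : ∀ i : Fin d, ∀ hi : (i : ℕ) + 1 < d,
      s i ≤ s ⟨(i : ℕ) + 1, hi⟩ ∧ s ⟨(i : ℕ) + 1, hi⟩ - s i ≤ 1)
    (hsd : s ⟨d - 1, Nat.sub_lt hd Nat.one_pos⟩ = d + 1)
    (p : Fin d → ℤ)
    (hmid : ∀ i : Fin d, ∀ hi : (i : ℕ) + 1 < d,
      p i * (s ⟨(i : ℕ) + 1, hi⟩ : ℤ) < p ⟨(i : ℕ) + 1, hi⟩ * (s i : ℤ))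
    (hlast : p ⟨d - 1, Nat.sub_lt hd Nat.one_pos⟩ < (s ⟨d - 1, Nat.sub_lt hd Nat.one_pos⟩ : ℤ)) :
    ∀ k n, ∀ h : n < d, n + k + 1 = d → p ⟨n, h⟩ ≤ ((n : ℕ) : ℤ) + 1 := by
  intro k
  induction k with
  | zero =>
    intro n h hk
    have hn : n = d - 1 := by omega
    subst hn
    have hl : p ⟨d - 1, h⟩ < (s ⟨d - 1, Nat.sub_lt hd Nat.one_pos⟩ : ℤ) := hlast
    have hv : ((s ⟨d - 1, Nat.sub_lt hd Nat.one_pos⟩ : ℕ) : ℤ) = (d : ℤ) + 1 := by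
      rw [hsd]; push_cast; ring
    omega
  | succ k ih =>
    intro n h hk
    have hn1 : n + 1 < d := by omega
    have ihn := ih (n + 1) hn1 (by omega)
    have hm : p ⟨n, h⟩ * (s ⟨n + 1, hn1⟩ : ℤ) < p ⟨n + 1, hn1⟩ * (s ⟨n, h⟩ : ℤ) := hmid ⟨n, h⟩ hn1
    have hsm : s ⟨n, h⟩ ≤ s ⟨n + 1, hn1⟩ := (hstep ⟨n, h⟩ hn1).1
    have hu : (0:ℤ) < ((s ⟨n, h⟩ : ℕ) : ℤ) := by exact_mod_cast hpos ⟨n, h⟩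
    have hv : (0:ℤ) < ((s ⟨n + 1, hn1⟩ : ℕ) : ℤ) := by exact_mod_cast hpos ⟨n + 1, hn1⟩
    have huv : ((s ⟨n, h⟩ : ℕ) : ℤ) ≤ ((s ⟨n + 1, hn1⟩ : ℕ) : ℤ) := by exact_mod_cast hsm
    have hb : p ⟨n + 1, hn1⟩ ≤ ((n : ℕ) : ℤ) + 2 := by
      push_cast at ihn
      linarith
    have h1 : p ⟨n + 1, hn1⟩ * (s ⟨n, h⟩ : ℤ) ≤ (((n : ℕ) : ℤ) + 2) * (s ⟨n, h⟩ : ℤ) :=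
      mul_le_mul_of_nonneg_right hb (le_of_lt hu)
    have h2 : (((n : ℕ) : ℤ) + 2) * (s ⟨n, h⟩ : ℤ) ≤ (((n : ℕ) : ℤ) + 2) * (s ⟨n + 1, hn1⟩ : ℤ) :=
      mul_le_mul_of_nonneg_left huv (by positivity)
    have h3 : p ⟨n, h⟩ * (s ⟨n + 1, hn1⟩ : ℤ) < (((n : ℕ) : ℤ) + 2) * (s ⟨n + 1, hn1⟩ : ℤ) :=
      lt_of_lt_of_le (lt_of_lt_of_le hm h1) h2
    have h4 : p ⟨n, h⟩ < ((n : ℕ) : ℤ) + 2 := lt_of_mul_lt_mul_right h3 (le_of_lt hv)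
    linarith

/-- The shifted diagonal point satisfies the strict inequalities. -/
theorem good_cand (d : ℕ) (hd : 0 < d) (s : Fin d → ℕ) (hpos : ∀ i, 0 < s i)
    (hstep : ∀ i : Fin d, ∀ hi : (i : ℕ) + 1 < d,
      s i ≤ s ⟨(i : ℕ) + 1, hi⟩ ∧ s ⟨(i : ℕ) + 1, hi⟩ - s i ≤ 1)
    (c : ℕ) (hc : 1 ≤ c) (hs : d + c ≤ s ⟨d - 1, Nat.sub_lt hd Nat.one_pos⟩) :
    (0 < (fun j : Fin d => ((j : ℕ) : ℤ) + c) ⟨0, hd⟩ ∧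
     (∀ i : Fin d, ∀ hi : (i : ℕ) + 1 < d,
        (fun j : Fin d => ((j : ℕ) : ℤ) + c) i * (s ⟨(i : ℕ) + 1, hi⟩ : ℤ) <
          (fun j : Fin d => ((j : ℕ) : ℤ) + c) ⟨(i : ℕ) + 1, hi⟩ * (s i : ℤ)) ∧
     (fun j : Fin d => ((j : ℕ) : ℤ) + c) ⟨d - 1, Nat.sub_lt hd Nat.one_pos⟩ <
       (s ⟨d - 1, Nat.sub_lt hd Nat.one_pos⟩ : ℤ)) := by
  have hlb : ∀ n, ∀ hn : n < d, n + c + 1 ≤ s ⟨n, hn⟩ := by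
    intro n hn
    have h1 := s_lb d s hstep (d - 1) n (Nat.sub_lt hd Nat.one_pos) hn (by omega)
    omega
  refine ⟨?_, ?_, ?_⟩
  · simp only [Nat.cast_zero, zero_add]
    exact_mod_cast hc
  · intro i hi
    simp only
    have hu := hlb (i : ℕ) i.isLt
    have hu' : (i : ℕ) + c + 1 ≤ s i := hu
    have huZ : ((i : ℕ) : ℤ) + (c : ℤ) + 1 ≤ ((s i : ℕ) : ℤ) := by exact_mod_cast hu'
    have hv1 : s ⟨(i : ℕ) + 1, hi⟩ ≤ s i + 1 := by
      have h1 := (hstep i hi).1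
      have h2 := (hstep i hi).2
      omega
    have hv1Z : ((s ⟨(i : ℕ) + 1, hi⟩ : ℕ) : ℤ) ≤ ((s i : ℕ) : ℤ) + 1 := by exact_mod_cast hv1
    have hA : (0:ℤ) ≤ ((i : ℕ) : ℤ) + (c : ℤ) := by positivity
    have e1 : (((i : ℕ) : ℤ) + (c : ℤ)) * ((s ⟨(i : ℕ) + 1, hi⟩ : ℕ) : ℤ) ≤
        (((i : ℕ) : ℤ) + (c : ℤ)) * (((s i : ℕ) : ℤ) + 1) :=
      mul_le_mul_of_nonneg_left hv1Z hA
    push_cast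
    push_cast at e1 huZ
    nlinarith [e1, huZ]
  · simp only
    have : ((d : ℕ) : ℤ) - 1 + (c : ℤ) < ((s ⟨d - 1, Nat.sub_lt hd Nat.one_pos⟩ : ℕ) : ℤ) := by
      have hsZ : ((d : ℕ) : ℤ) + (c : ℤ) ≤ ((s ⟨d - 1, Nat.sub_lt hd Nat.one_pos⟩ : ℕ) : ℤ) := by
        exact_mod_cast hs
      linarith
    have hcast : (((d - 1 : ℕ) : ℤ)) = ((d : ℕ) : ℤ) - 1 := by omega
    rw [hcast]
    exact this

end Aux

/-- for weakly increasing `s` with steps at most 1, the interior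
of `P_d^(s)` contains exactly one lattice point iff `s_d = d + 1`; the unique
interior lattice point is `(1, 2, …, d)`. -/
theorem stmt_9 (d : ℕ) (hd : 0 < d) (s : Fin d → ℕ) (hpos : ∀ i, 0 < s i)
    (hstep : ∀ i : Fin d, ∀ hi : (i : ℕ) + 1 < d,
      s i ≤ s ⟨(i : ℕ) + 1, hi⟩ ∧ s ⟨(i : ℕ) + 1, hi⟩ - s i ≤ 1) :
    ((∃! p : Fin d → ℤ, (fun j => (p j : ℝ)) ∈ interior (lectureHall d s)) ↔
      s ⟨d - 1, Nat.sub_lt hd Nat.one_pos⟩ = d + 1) ∧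
    (s ⟨d - 1, Nat.sub_lt hd Nat.one_pos⟩ = d + 1 →
      ∀ p : Fin d → ℤ, (fun j => (p j : ℝ)) ∈ interior (lectureHall d s) →
        p = fun j : Fin d => ((j : ℕ) : ℤ) + 1) := by
  have uniq : s ⟨d - 1, Nat.sub_lt hd Nat.one_pos⟩ = d + 1 →
      ∀ p : Fin d → ℤ, (fun j => (p j : ℝ)) ∈ interior (lectureHall d s) →
        p = fun j : Fin d => ((j : ℕ) : ℤ) + 1 := by
    intro hsd p hp
    obtain ⟨h0, hmid, hlast⟩ := (int_interior_iff d hd s hpos p).mp hp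
    funext j
    have hlo := lower_bd d hd s hpos hstep p h0 hmid (j : ℕ) j.isLt
    have hup := upper_bd d hd s hpos hstep hsd p hmid hlast (d - 1 - (j : ℕ)) (j : ℕ) j.isLt
      (by omega)
    have hlo' : ((j : ℕ) : ℤ) + 1 ≤ p j := hlo
    have hup' : p j ≤ ((j : ℕ) : ℤ) + 1 := hup
    omega
  have exist1 : s ⟨d - 1, Nat.sub_lt hd Nat.one_pos⟩ = d + 1 →
      (fun j : Fin d => (((fun j : Fin d => ((j : ℕ) : ℤ) + 1) j : ℤ) : ℝ)) ∈
        interior (lectureHall d s) := by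
    intro hsd
    exact (int_interior_iff d hd s hpos _).mpr
      (good_cand d hd s hpos hstep 1 le_rfl (by omega))
  constructor
  · constructor
    · rintro ⟨p, hp, hU⟩
      obtain ⟨h0, hmid, hlast⟩ := (int_interior_iff d hd s hpos p).mp hp
      have hplast := lower_bd d hd s hpos hstep p h0 hmid (d - 1) (Nat.sub_lt hd Nat.one_pos)
      have hs1 : d + 1 ≤ s ⟨d - 1, Nat.sub_lt hd Nat.one_pos⟩ := by omega
      by_contra hne
      have hs2 : d + 2 ≤ s ⟨d - 1, Nat.sub_lt hd Nat.one_pos⟩ := by omega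
      have hq := (int_interior_iff d hd s hpos (fun j : Fin d => ((j : ℕ) : ℤ) + 1)).mpr
        (good_cand d hd s hpos hstep 1 le_rfl (by omega))
      have hr := (int_interior_iff d hd s hpos (fun j : Fin d => ((j : ℕ) : ℤ) + 2)).mpr
        (good_cand d hd s hpos hstep 2 (by omega) hs2)
      have e1 := hU _ hq
      have e2 := hU _ hr
      have e3 := congrFun (e1.trans e2.symm) ⟨0, hd⟩
      simp at e3
    · intro hsd
      exact ⟨fun j : Fin d => ((j : ℕ) : ℤ) + 1, exist1 hsd, fun p hp => uniq hsd p hp⟩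
  · exact uniq
end

section
/- Let d ≥ 1 and let s = (s_1,…,s_d) be a sequence of positive integers with s_i ≤ s_{i+1} and s_{i+1} − s_i ≤ 1 for all 1 ≤ i ≤ d−1, and with s_d = d+1. Then the sequence e = (1, 2, …, d) is the unique s-inversion sequence all of whose d positions 0,1,…,d−1 are ascents; that is, it is the unique integer sequence with 0 ≤ e_i < s_i for all i such that (with e_0 = 0, s_0 = 1) e_i/s_i < e_{i+1}/s_{i+1} holds for every 0 ≤ i ≤ d−1. -/
open Pointwise BigOperators

/-!
Since `s_d = d + 1` and `s` grows by at most one per step, `s_i ≥ i + 1`, and then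
`i / s_i < (i + 1) / s_{i+1}` because `i s_{i+1} ≤ i (s_i + 1) < (i + 1) s_i`.
Conversely, as `s` is weakly increasing and `e ≥ 0`, the ascent `e_i / s_i < e_{i+1} / s_{i+1}`
forces `e_i < e_{i+1}`; so `i ↦ e_i - i` is weakly increasing, while `e_1 ≥ 1` and
`e_d < s_d = d + 1` pin it to the constant `0`.
-/

section Fractions

variable {K : Type*} [Field K] [LinearOrder K] [IsStrictOrderedRing K] {a b p q : K}

lemma lt_of_div_lt_div_of_le (ha : 0 ≤ a) (hp : 0 < p) (hpq : p ≤ q) (h : a / p < b / q) :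
    a < b :=
  (div_lt_div_iff_of_pos_right (hp.trans_le hpq)).1 <|
    (div_le_div_of_nonneg_left ha hp hpq).trans_lt h

lemma div_lt_add_one_div (ha : 0 ≤ a) (hap : a < p) (hq : 0 < q) (hqp : q ≤ p + 1) :
    a / p < (a + 1) / q := by
  rw [div_lt_div_iff₀ (ha.trans_lt hap) hq]
  nlinarith

end Fractions

namespace Fin

variable {n : ℕ}

lemma monotone_sub_val_of_lt_succ {f : Fin (n + 1) → ℤ} (h : ∀ i : Fin n, f i.castSucc < f i.succ) :
    Monotone fun i : Fin (n + 1) => f i - i :=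
  monotone_iff_le_succ.2 fun i => by have := h i; simp only [val_castSucc, val_succ]; push_cast; omega

lemma antitone_sub_val_of_succ_le_add_one {f : Fin (n + 1) → ℕ}
    (h : ∀ i : Fin n, f i.succ ≤ f i.castSucc + 1) :
    Antitone fun i : Fin (n + 1) => (f i : ℤ) - i :=
  antitone_iff_succ_le.2 fun i => by have := h i; simp only [val_castSucc, val_succ]; push_cast; omega

end Fin

section InversionSequences

variable {n : ℕ}

lemma allAscents_iff (s : Fin (n + 1) → ℕ) (e : Fin (n + 1) → ℤ) :
    allAscents (n + 1) s e ↔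
      0 < (e 0 : ℝ) / s 0 ∧
        ∀ i : Fin n, (e i.castSucc : ℝ) / s i.castSucc < (e i.succ : ℝ) / s i.succ := by
  rw [allAscents, zero_div]
  refine ⟨fun h => ⟨h.1 n.succ_pos, fun i => h.2 i.castSucc i.succ.isLt⟩,
    fun h => ⟨fun _ => h.1, fun i hi => h.2 ⟨i, by omega⟩⟩⟩

lemma val_add_two_le_of_succ_le_add_one {s : Fin (n + 1) → ℕ}
    (hjump : ∀ i : Fin n, s i.succ ≤ s i.castSucc + 1) (hlast : s (Fin.last n) = n + 2)
    (i : Fin (n + 1)) : (i : ℕ) + 2 ≤ s i := by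
  have := Fin.antitone_sub_val_of_succ_le_add_one hjump (Fin.le_last i)
  simp only [hlast, Fin.val_last] at this
  omega

lemma eq_val_add_one_of_lt_succ {e : Fin (n + 1) → ℤ} (he : ∀ i : Fin n, e i.castSucc < e i.succ)
    (hfirst : 0 < e 0) (hlast : e (Fin.last n) ≤ n + 1) (i : Fin (n + 1)) : e i = i + 1 := by
  have hmono := Fin.monotone_sub_val_of_lt_succ he
  have h₀ := hmono (Fin.zero_le i)
  have h₁ := hmono (Fin.le_last i)
  simp only [Fin.val_zero, Fin.val_last, Nat.cast_zero, sub_zero] at h₀ h₁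
  omega

end InversionSequences

theorem stmt_10_general (d : ℕ) (hd : 0 < d) (s : Fin d → ℕ)
    (hstep : ∀ i : Fin d, ∀ hi : (i : ℕ) + 1 < d,
      s i ≤ s ⟨(i : ℕ) + 1, hi⟩ ∧ s ⟨(i : ℕ) + 1, hi⟩ - s i ≤ 1)
    (hlast : s ⟨d - 1, Nat.sub_lt hd Nat.one_pos⟩ = d + 1) :
    ((∀ i : Fin d, 0 ≤ ((i : ℕ) : ℤ) + 1 ∧ ((i : ℕ) : ℤ) + 1 < (s i : ℤ)) ∧
      allAscents d s (fun i : Fin d => ((i : ℕ) : ℤ) + 1)) ∧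
    ∀ e : Fin d → ℤ, (∀ i, 0 ≤ e i ∧ e i < (s i : ℤ)) → allAscents d s e →
      e = fun i : Fin d => ((i : ℕ) : ℤ) + 1 := by
  obtain ⟨n, rfl⟩ := Nat.exists_eq_add_one_of_ne_zero hd.ne'
  have hmono (i : Fin n) : s i.castSucc ≤ s i.succ := (hstep i.castSucc i.succ.isLt).1
  have hjump (i : Fin n) : s i.succ ≤ s i.castSucc + 1 :=
    Nat.sub_le_iff_le_add'.1 (hstep i.castSucc i.succ.isLt).2
  have hs_ge := val_add_two_le_of_succ_le_add_one hjump hlast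
  have hs_pos (i : Fin (n + 1)) : (0 : ℝ) < s i := Nat.cast_pos.2 (by have := hs_ge i; omega)
  refine ⟨⟨fun i => ⟨by positivity, by have := hs_ge i; omega⟩,
    (allAscents_iff s _).2 ⟨div_pos (by simp) (hs_pos 0), fun i => ?_⟩⟩, fun e he hasc => ?_⟩
  · have hlt : ((i : ℕ) : ℝ) + 1 < s i.castSucc := by exact_mod_cast hs_ge i.castSucc
    simp only [Fin.val_succ, Fin.val_castSucc]
    push_cast
    exact div_lt_add_one_div (by positivity) hlt (hs_pos _) (by exact_mod_cast hjump i)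
  · obtain ⟨hfirst, hasc⟩ := (allAscents_iff s e).1 hasc
    have hincr (i : Fin n) : e i.castSucc < e i.succ := by
      exact_mod_cast lt_of_div_lt_div_of_le (by exact_mod_cast (he _).1) (hs_pos _)
        (by exact_mod_cast hmono i) (hasc i)
    have he_last : e (Fin.last n) < n + 2 := by
      have := (he (Fin.last n)).2
      rwa [show s (Fin.last n) = n + 2 from hlast, Nat.cast_add, Nat.cast_two] at this
    funext i
    exact eq_val_add_one_of_lt_succ hincr
      (by exact_mod_cast (div_pos_iff_of_pos_right (hs_pos 0)).1 hfirst) (by omega) i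

/-- for weakly increasing `s` with steps at most 1 and
`s_d = d + 1`, the sequence `e = (1, 2, …, d)` is the unique `s`-inversion
sequence all of whose positions `0, …, d-1` are ascents. -/
theorem stmt_10 (d : ℕ) (hd : 0 < d) (s : Fin d → ℕ) (hpos : ∀ i, 0 < s i)
    (hstep : ∀ i : Fin d, ∀ hi : (i : ℕ) + 1 < d,
      s i ≤ s ⟨(i : ℕ) + 1, hi⟩ ∧ s ⟨(i : ℕ) + 1, hi⟩ - s i ≤ 1)
    (hlast : s ⟨d - 1, Nat.sub_lt hd Nat.one_pos⟩ = d + 1) :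
    ((∀ i : Fin d, 0 ≤ ((i : ℕ) : ℤ) + 1 ∧ ((i : ℕ) : ℤ) + 1 < (s i : ℤ)) ∧
      allAscents d s (fun i : Fin d => ((i : ℕ) : ℤ) + 1)) ∧
    ∀ e : Fin d → ℤ, (∀ i, 0 ≤ e i ∧ e i < (s i : ℤ)) → allAscents d s e →
      e = fun i : Fin d => ((i : ℕ) : ℤ) + 1 :=
  stmt_10_general d hd s hstep hlast
end

section
/- Let d ≥ 1 and let s = (s_1,…,s_d) be a sequence of positive integers with s_i ≤ s_{i+1} and s_{i+1} − s_i ≤ 1 for all 1 ≤ i ≤ d−1, and with s_d = d+1 (so that P_d^{(s)} has the unique interior lattice point p with p_j = j for all j), and set Q = P_d^{(s)} − p. Then the dual polytope Q^∨ = {y ∈ ℝ^d : ⟨x,y⟩ ≤ 1 for all x ∈ Q} is a lattice polytope, i.e. Q^∨ = conv(Q^∨ ∩ ℤ^d), if and only if for every 1 ≤ i ≤ d−1 the integer k_i = (i+1) s_i − i s_{i+1} divides both s_i and s_{i+1}. -/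
open Pointwise BigOperators

/-!
Translated by `p`, the lecture hall polytope is the simplex `Q` cut out by the `d + 1`
inequalities `x_i/s_i ≤ x_{i+1}/s_{i+1}`, `0 ≤ i ≤ d`, where `x_0 = 0`, `s_0 = 1` and
`x_{d+1} = s_{d+1} = d + 1`. In the coordinates `z = x - p` the `i`-th one reads `⟨z, a_i⟩ ≤ 1`
with `a_i = (s_{i+1} e_i - s_i e_{i+1}) / k_i` (`e_0 = e_{d+1} = 0`); here `k_i > 0` because
`s_i ≥ i + 1`, by descending from `s_d = d + 1` in steps of at most one.

The vertex `v_i` of `Q` opposite to facet `i` has `⟨v_j, a_i⟩ = 1` for `j ≠ i`. With the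
barycentric coordinates `μ_i` of the origin in `Q`, every `y` is `∑ μ_i (1 - ⟨v_i, y⟩) a_i`,
with coefficients summing to `1` and nonnegative on `Q^∨`. So `Q^∨ = conv (a_0, …, a_d)`, each
`a_i` is an extreme point of `Q^∨`, and as extreme points of `conv S` lie in `S`, `Q^∨` is a
lattice polytope iff every `a_i` is a lattice point. Finally `a_0 = -e_1` and `a_d = e_d`, while
for `1 ≤ i ≤ d - 1` the point `a_i` is integral iff `k_i` divides `s_i` and `s_{i+1}`.
-/

open Matrix

lemma convex_dualPolytope {d : ℕ} (Q : Set (Fin d → ℝ)) : Convex ℝ (dualPolytope Q) := by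
  intro y₁ hy₁ y₂ hy₂ a b ha hb hab x hx
  have h₁ : x ⬝ᵥ y₁ ≤ 1 := hy₁ x hx
  have h₂ : x ⬝ᵥ y₂ ≤ 1 := hy₂ x hx
  change x ⬝ᵥ (a • y₁ + b • y₂) ≤ 1
  rw [dotProduct_add, dotProduct_smul, dotProduct_smul, smul_eq_mul, smul_eq_mul]
  nlinarith

lemma exists_intCast_eq_div_iff_dvd {a b : ℤ} (ha : a ≠ 0) :
    (∃ n : ℤ, (b : ℝ) / a = n) ↔ a ∣ b := by
  have ha' : (a : ℝ) ≠ 0 := by exact_mod_cast ha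
  constructor
  · rintro ⟨n, hn⟩
    refine ⟨n, ?_⟩
    rw [div_eq_iff ha'] at hn
    exact_mod_cast hn.trans (mul_comm _ _)
  · rintro ⟨n, rfl⟩
    exact ⟨n, by push_cast; field_simp⟩

namespace LectureHall

variable {d : ℕ} (s : Fin d → ℕ)

/-- The paper's `s_j` (1-indexed), extended by `s_0 = 1` and `s_{d+1} = d + 1`. -/
def sExt (j : ℕ) : ℤ :=
  if h0 : j = 0 then 1 else if h : j ≤ d then s ⟨j - 1, by omega⟩ else j

def kCoeff (i : ℕ) : ℤ := (i + 1) * sExt s i - i * sExt s (i + 1)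

/-- The paper's coordinate `z_j` of `z : Fin d → ℝ`, with `z_0 = z_{d+1} = 0`. -/
def coord (z : Fin d → ℝ) (j : ℕ) : ℝ := ∑ r : Fin d, if (r : ℕ) + 1 = j then z r else 0

def shifted : Set (Fin d → ℝ) :=
  (fun x (j : Fin d) => x j - (((j : ℕ) : ℝ) + 1)) '' lectureHall d s

def facet (i : ℕ) (z : Fin d → ℝ) : ℝ :=
  sExt s (i + 1) * coord z i - sExt s i * coord z (i + 1)

variable {s}

lemma sExt_zero : sExt s 0 = 1 := rfl

lemma sExt_succ_of_lt {j : ℕ} (hj : j < d) : sExt s (j + 1) = s ⟨j, hj⟩ := by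
  simp [sExt, Nat.succ_le_of_lt hj]

lemma sExt_of_lt {j : ℕ} (hj : d < j) : sExt s j = j := by
  simp [sExt, show j ≠ 0 by omega, show ¬ j ≤ d by omega]

lemma sExt_pos (hpos : ∀ i, 0 < s i) (j : ℕ) : 0 < sExt s j := by
  unfold sExt
  split_ifs
  · exact one_pos
  · exact_mod_cast hpos _
  · omega

lemma coord_zero (z : Fin d → ℝ) : coord z 0 = 0 := by simp [coord]

lemma coord_succ_of_lt (z : Fin d → ℝ) {j : ℕ} (hj : j < d) :
    coord z (j + 1) = z ⟨j, hj⟩ := by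
  rw [coord, Finset.sum_eq_single ⟨j, hj⟩] <;> simp +contextual [Fin.ext_iff]

lemma coord_of_lt (z : Fin d → ℝ) {j : ℕ} (hj : d < j) : coord z j = 0 :=
  Finset.sum_eq_zero fun r _ => if_neg (by omega)

lemma mem_shifted_iff_add {z : Fin d → ℝ} :
    z ∈ shifted s ↔ (fun j : Fin d => z j + (((j : ℕ) : ℝ) + 1)) ∈ lectureHall d s := by
  constructor
  · rintro ⟨x, hx, rfl⟩
    simpa using hx
  · exact fun h => ⟨_, h, by simp⟩

lemma facet_le_kCoeff_iff {i : ℕ} {z : Fin d → ℝ} :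
    facet s i z ≤ kCoeff s i ↔
      sExt s (i + 1) * (coord z i + i) ≤ sExt s i * (coord z (i + 1) + (i + 1)) := by
  rw [facet, kCoeff]
  push_cast
  constructor <;> intro h <;> linarith

lemma mem_shifted_iff (hd : 0 < d) (hpos : ∀ i, 0 < s i) {z : Fin d → ℝ} :
    z ∈ shifted s ↔ ∀ i ≤ d, facet s i z ≤ kCoeff s i := by
  have hs : ∀ i, (0 : ℝ) < s i := fun i => by exact_mod_cast hpos i
  have first :
      0 ≤ (z ⟨0, hd⟩ + ((0 : ℕ) + 1)) / s ⟨0, hd⟩ ↔ facet s 0 z ≤ kCoeff s 0 := by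
    rw [facet_le_kCoeff_iff, le_div_iff₀ (hs _), coord_zero, coord_succ_of_lt _ hd,
      sExt_zero]
    simp
  have middle : ∀ j (hj : j + 1 < d),
      (z ⟨j, by omega⟩ + ((j : ℕ) + 1)) / s ⟨j, by omega⟩ ≤
          (z ⟨j + 1, hj⟩ + (((j + 1 : ℕ) : ℝ) + 1)) / s ⟨j + 1, hj⟩ ↔
        facet s (j + 1) z ≤ kCoeff s (j + 1) := by
    intro j hj
    rw [facet_le_kCoeff_iff, div_le_div_iff₀ (hs _) (hs _), coord_succ_of_lt _ hj,
      coord_succ_of_lt _ (by omega), sExt_succ_of_lt hj, sExt_succ_of_lt (by omega)]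
    push_cast
    constructor <;> intro h <;> linarith
  have last :
      (z ⟨d - 1, by omega⟩ + (((d - 1 : ℕ) : ℝ) + 1)) / s ⟨d - 1, by omega⟩ ≤ 1 ↔
        facet s d z ≤ kCoeff s d := by
    obtain ⟨n, rfl⟩ : ∃ n, d = n + 1 := ⟨d - 1, by omega⟩
    rw [facet_le_kCoeff_iff, div_le_one (hs _), coord_of_lt z (j := n + 1 + 1) (by omega),
      coord_succ_of_lt z (j := n) (by omega), sExt_of_lt (j := n + 1 + 1) (by omega),
      sExt_succ_of_lt (j := n) (by omega)]
    simp only [Nat.add_sub_cancel]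
    push_cast
    constructor <;> intro h <;> nlinarith
  rw [mem_shifted_iff_add]
  constructor
  · rintro ⟨h0, hmid, hlast⟩ i hi
    rcases i with _ | j
    · exact first.1 (h0 hd)
    · rcases (by omega : j + 1 < d ∨ j + 1 = d) with hj | rfl
      · exact (middle j hj).1 (hmid ⟨j, by omega⟩ hj)
      · exact last.1 (hlast hd)
  · intro h
    exact ⟨fun _ => first.2 (h 0 (by omega)), fun i hi => (middle i hi).2 (h _ hi.le),
      fun _ => last.2 (h d le_rfl)⟩

variable (s)

/-- The vertex of `shifted s` opposite to its facet `i`: the paper's `x - p` with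
`x_j = s_j` for `j > i` and `x_j = 0` for `j ≤ i`. -/
def vertex (i : ℕ) : Fin d → ℝ := fun r =>
  (if i ≤ r then (sExt s (r + 1) : ℝ) else 0) - ((r : ℕ) + 1)

/-- The outer normal of facet `i`, scaled so that the facet is `z ⬝ᵥ dualVertex s i = 1`. -/
noncomputable def dualVertex (i : ℕ) : Fin d → ℝ := fun r =>
  ((if (r : ℕ) + 1 = i then (sExt s (i + 1) : ℝ) else 0) -
    if (r : ℕ) + 1 = i + 1 then (sExt s i : ℝ) else 0) / kCoeff s i

variable {s}

lemma coord_vertex {i j : ℕ} (hi : i ≤ d) (hj : j ≤ d + 1) :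
    coord (vertex s i) j = (if i < j then (sExt s j : ℝ) else 0) - j := by
  rcases j with _ | j
  · simp [coord_zero]
  rcases (by omega : j < d ∨ j = d) with hj | rfl
  · rw [coord_succ_of_lt _ hj]
    simp [vertex]
  · rw [coord_of_lt _ (by omega), if_pos (by omega), sExt_of_lt (by omega)]
    push_cast
    ring

lemma facet_vertex {i j : ℕ} (hi : i ≤ d) (hj : j ≤ d) :
    facet s j (vertex s i) =
      kCoeff s j - if i = j then (sExt s j * sExt s (j + 1) : ℝ) else 0 := by
  rw [facet, coord_vertex hi (by omega), coord_vertex hi (by omega), kCoeff]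
  push_cast
  split_ifs <;> first | ring1 | (exfalso; omega)

lemma vertex_mem_shifted (hd : 0 < d) (hpos : ∀ i, 0 < s i) {i : ℕ} (hi : i ≤ d) :
    vertex s i ∈ shifted s := by
  refine (mem_shifted_iff hd hpos).2 fun j hj => ?_
  have hsj : (0 : ℝ) < sExt s j := by exact_mod_cast sExt_pos hpos j
  have hsj' : (0 : ℝ) < sExt s (j + 1) := by exact_mod_cast sExt_pos hpos (j + 1)
  rw [facet_vertex hi hj]
  split_ifs
  · nlinarith
  · simp

lemma dotProduct_dualVertex (z : Fin d → ℝ) (i : ℕ) :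
    z ⬝ᵥ dualVertex s i = facet s i z / kCoeff s i := by
  rw [facet, coord, coord, Finset.mul_sum, Finset.mul_sum, ← Finset.sum_sub_distrib,
    Finset.sum_div]
  refine Finset.sum_congr rfl fun r _ => ?_
  simp only [dualVertex]
  split_ifs <;> ring

lemma dualVertex_mem_dualPolytope (hd : 0 < d) (hpos : ∀ i, 0 < s i)
    (hk : ∀ i ≤ d, 0 < kCoeff s i) {i : ℕ} (hi : i ≤ d) :
    dualVertex s i ∈ dualPolytope (shifted s) := by
  intro z hz
  change z ⬝ᵥ dualVertex s i ≤ 1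
  rw [dotProduct_dualVertex, div_le_one (by exact_mod_cast hk i hi)]
  exact (mem_shifted_iff hd hpos).1 hz i hi

lemma vertex_dotProduct_sub_vertex_succ (r : Fin d) (v : Fin d → ℝ) :
    vertex s r ⬝ᵥ v - vertex s (r + 1) ⬝ᵥ v = sExt s (r + 1) * v r := by
  have : vertex s r - vertex s (r + 1) = Pi.single r (sExt s (r + 1) : ℝ) := by
    funext c
    by_cases hc : c = r
    · subst hc
      simp [vertex]
      ring
    · have : (r : ℕ) ≠ c := fun h => hc (Fin.ext h.symm)
      simp [vertex, hc]
      split_ifs <;> first | ring1 | (exfalso; omega)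
  rw [← sub_dotProduct, this, single_dotProduct]

lemma eq_of_forall_vertex_dotProduct_eq (hpos : ∀ i, 0 < s i) {v w : Fin d → ℝ}
    (h : ∀ i ≤ d, vertex s i ⬝ᵥ v = vertex s i ⬝ᵥ w) : v = w := by
  funext r
  have hv := vertex_dotProduct_sub_vertex_succ (s := s) r v
  have hw := vertex_dotProduct_sub_vertex_succ (s := s) r w
  rw [h r (by omega), h (r + 1) (by omega), hw] at hv
  exact mul_left_cancel₀ (by exact_mod_cast (sExt_pos hpos _).ne') hv.symm

variable (s)

/-- The barycentric coordinates of the origin (the image of `p`) in the simplex `shifted s`. -/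
noncomputable def mu (i : ℕ) : ℝ :=
  ((i + 1 : ℕ) : ℝ) / sExt s (i + 1) - (i : ℝ) / sExt s i

noncomputable def weight (y : Fin d → ℝ) (i : ℕ) : ℝ := mu s i * (1 - vertex s i ⬝ᵥ y)

variable {s}

lemma mu_eq (hpos : ∀ i, 0 < s i) (i : ℕ) :
    mu s i = kCoeff s i / (sExt s i * sExt s (i + 1)) := by
  have h1 : (sExt s i : ℝ) ≠ 0 := by exact_mod_cast (sExt_pos hpos i).ne'
  have h2 : (sExt s (i + 1) : ℝ) ≠ 0 := by exact_mod_cast (sExt_pos hpos (i + 1)).ne'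
  rw [mu, kCoeff]
  push_cast
  field_simp

lemma sum_range_mu (n : ℕ) : ∑ i ∈ Finset.range n, mu s i = n / sExt s n := by
  have := Finset.sum_range_sub (fun n : ℕ => (n : ℝ) / sExt s n) n
  simp only [Nat.cast_zero, zero_div, sub_zero] at this
  exact this

lemma sum_mu : ∑ i ∈ Finset.range (d + 1), mu s i = 1 := by
  rw [sum_range_mu, sExt_of_lt (by omega)]
  push_cast
  exact div_self (by positivity)

lemma sum_mu_smul_vertex (hpos : ∀ i, 0 < s i) :
    ∑ i ∈ Finset.range (d + 1), mu s i • vertex s i = 0 := by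
  funext r
  have hfilter : (Finset.range (d + 1)).filter (· ≤ (r : ℕ)) = Finset.range (r + 1) := by
    ext i
    simp only [Finset.mem_filter, Finset.mem_range]
    omega
  simp only [Finset.sum_apply, Pi.smul_apply, smul_eq_mul, vertex, mul_sub, mul_ite, mul_zero,
    Finset.sum_sub_distrib, ← Finset.sum_filter, hfilter, ← Finset.sum_mul, sum_mu]
  have : (sExt s (r + 1) : ℝ) ≠ 0 := by exact_mod_cast (sExt_pos hpos _).ne'
  rw [sum_range_mu]
  field_simp
  simp

lemma sum_weight (hpos : ∀ i, 0 < s i) (y : Fin d → ℝ) :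
    ∑ i ∈ Finset.range (d + 1), weight s y i = 1 := by
  have : ∑ i ∈ Finset.range (d + 1), mu s i * (vertex s i ⬝ᵥ y) =
      (∑ i ∈ Finset.range (d + 1), mu s i • vertex s i) ⬝ᵥ y := by
    simp only [sum_dotProduct, smul_dotProduct, smul_eq_mul]
  simp only [weight, mul_sub, mul_one, Finset.sum_sub_distrib, sum_mu, this,
    sum_mu_smul_vertex hpos, zero_dotProduct, sub_zero]

lemma mu_pos (hpos : ∀ i, 0 < s i) (hk : ∀ i ≤ d, 0 < kCoeff s i) {i : ℕ} (hi : i ≤ d) :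
    0 < mu s i := by
  rw [mu_eq hpos]
  have := sExt_pos hpos i
  have := sExt_pos hpos (i + 1)
  have := hk i hi
  positivity

lemma vertex_dotProduct_dualVertex (hpos : ∀ i, 0 < s i) {i j : ℕ} (hi : i ≤ d) (hj : j ≤ d)
    (hk : kCoeff s j ≠ 0) :
    vertex s i ⬝ᵥ dualVertex s j = 1 - if i = j then (mu s j)⁻¹ else 0 := by
  have hk' : (kCoeff s j : ℝ) ≠ 0 := by exact_mod_cast hk
  rw [dotProduct_dualVertex, facet_vertex hi hj, mu_eq hpos, inv_div]
  split_ifs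
  · field_simp
  · simp [hk']

lemma sum_weight_smul_dualVertex (hpos : ∀ i, 0 < s i) (hk : ∀ i ≤ d, 0 < kCoeff s i)
    (y : Fin d → ℝ) :
    ∑ i ∈ Finset.range (d + 1), weight s y i • dualVertex s i = y := by
  refine eq_of_forall_vertex_dotProduct_eq hpos fun j hj => ?_
  calc vertex s j ⬝ᵥ ∑ i ∈ Finset.range (d + 1), weight s y i • dualVertex s i
      = ∑ i ∈ Finset.range (d + 1),
          weight s y i * (1 - if j = i then (mu s i)⁻¹ else 0) := by
        rw [dotProduct_sum]
        refine Finset.sum_congr rfl fun i hi => ?_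
        have hi : i ≤ d := Finset.mem_range_succ_iff.1 hi
        rw [dotProduct_smul, vertex_dotProduct_dualVertex hpos hj hi (hk i hi).ne', smul_eq_mul]
    _ = 1 - weight s y j / mu s j := by
        simp only [mul_sub, mul_one, Finset.sum_sub_distrib, sum_weight hpos, mul_ite, mul_zero,
          Finset.sum_ite_eq, Finset.mem_range_succ_iff.2 hj, if_true, div_eq_mul_inv]
    _ = vertex s j ⬝ᵥ y := by
        rw [weight, mul_div_cancel_left₀ _ (mu_pos hpos hk hj).ne']
        ring

lemma weight_nonneg (hd : 0 < d) (hpos : ∀ i, 0 < s i) (hk : ∀ i ≤ d, 0 < kCoeff s i)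
    {y : Fin d → ℝ} (hy : y ∈ dualPolytope (shifted s)) {i : ℕ} (hi : i ≤ d) :
    0 ≤ weight s y i :=
  mul_nonneg (mu_pos hpos hk hi).le (sub_nonneg.2 (hy _ (vertex_mem_shifted hd hpos hi)))

lemma weight_dualVertex (hpos : ∀ i, 0 < s i) {i j : ℕ} (hi : i ≤ d) (hj : j ≤ d)
    (hk : kCoeff s i ≠ 0) (hji : j ≠ i) : weight s (dualVertex s i) j = 0 := by
  rw [weight, vertex_dotProduct_dualVertex hpos hj hi hk, if_neg hji]
  ring

lemma weight_add {a b : ℝ} (hab : a + b = 1) (y₁ y₂ : Fin d → ℝ) (i : ℕ) :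
    weight s (a • y₁ + b • y₂) i = a * weight s y₁ i + b * weight s y₂ i := by
  simp only [weight, dotProduct_add, dotProduct_smul, smul_eq_mul]
  linear_combination (-mu s i) * hab

section
variable (hd : 0 < d) (hpos : ∀ i, 0 < s i) (hk : ∀ i ≤ d, 0 < kCoeff s i)
include hd hpos hk

lemma eq_dualVertex_of_mem_openSegment {i : ℕ} (hi : i ≤ d) {y₁ y₂ : Fin d → ℝ}
    (hy₁ : y₁ ∈ dualPolytope (shifted s)) (hy₂ : y₂ ∈ dualPolytope (shifted s))
    (h : dualVertex s i ∈ openSegment ℝ y₁ y₂) : y₁ = dualVertex s i := by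
  obtain ⟨a, b, ha, hb, hab, hy⟩ := h
  have hzero : ∀ j ∈ Finset.range (d + 1), j ≠ i → weight s y₁ j = 0 := by
    intro j hj hji
    have hj : j ≤ d := Finset.mem_range_succ_iff.1 hj
    have h₁ := weight_nonneg hd hpos hk hy₁ hj
    have h₂ := weight_nonneg hd hpos hk hy₂ hj
    have hsum := weight_add (s := s) hab y₁ y₂ j
    rw [hy, weight_dualVertex hpos hi hj (hk i hi).ne' hji] at hsum
    nlinarith
  have hi' : i ∈ Finset.range (d + 1) := Finset.mem_range_succ_iff.2 hi
  have hwi : weight s y₁ i = 1 := by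
    rw [← sum_weight hpos y₁, Finset.sum_eq_single i hzero fun h => absurd hi' h]
  rw [← sum_weight_smul_dualVertex hpos hk y₁, Finset.sum_eq_single i
    (fun j hj hji => by rw [hzero j hj hji, zero_smul]) fun h => absurd hi' h, hwi, one_smul]

lemma dualVertex_mem_extremePoints {i : ℕ} (hi : i ≤ d) :
    dualVertex s i ∈ (dualPolytope (shifted s)).extremePoints ℝ :=
  mem_extremePoints.2 ⟨dualVertex_mem_dualPolytope hd hpos hk hi, fun y₁ hy₁ y₂ hy₂ h =>
    ⟨eq_dualVertex_of_mem_openSegment hd hpos hk hi hy₁ hy₂ h,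
      eq_dualVertex_of_mem_openSegment hd hpos hk hi hy₂ hy₁
        (openSegment_symm ℝ y₁ y₂ ▸ h)⟩⟩

end

theorem dualPolytope_shifted_eq_convexHull_iff (hd : 0 < d) (hpos : ∀ i, 0 < s i)
    (hk : ∀ i ≤ d, 0 < kCoeff s i) :
    dualPolytope (shifted s) = convexHull ℝ (dualPolytope (shifted s) ∩ latticePoints d) ↔
      ∀ i ≤ d, dualVertex s i ∈ latticePoints d := by
  refine ⟨fun h i hi => ?_, fun h => ?_⟩
  · have := dualVertex_mem_extremePoints hd hpos hk hi
    rw [h] at this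
    exact (extremePoints_convexHull_subset this).2
  · refine Set.Subset.antisymm (fun y hy => ?_)
      (convexHull_min Set.inter_subset_left (convex_dualPolytope _))
    rw [← sum_weight_smul_dualVertex hpos hk y]
    refine (convex_convexHull ℝ _).sum_mem
      (fun i hi => weight_nonneg hd hpos hk hy (Finset.mem_range_succ_iff.1 hi)) (sum_weight hpos y)
      fun i hi => subset_convexHull ℝ _ ?_
    have hi : i ≤ d := Finset.mem_range_succ_iff.1 hi
    exact ⟨dualVertex_mem_dualPolytope hd hpos hk hi, h i hi⟩

lemma dualVertex_apply (i : ℕ) (r : Fin d) :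
    dualVertex s i r =
      if (r : ℕ) + 1 = i then (sExt s (i + 1) : ℝ) / kCoeff s i
      else if (r : ℕ) = i then -((sExt s i : ℝ) / kCoeff s i) else 0 := by
  simp only [dualVertex, add_left_inj]
  split_ifs <;> first | ring1 | (exfalso; omega)

lemma dualVertex_mem_latticePoints_iff {i : ℕ} (hi : i ≤ d) (hk : kCoeff s i ≠ 0) :
    dualVertex s i ∈ latticePoints d ↔
      (1 ≤ i → kCoeff s i ∣ sExt s (i + 1)) ∧ (i < d → kCoeff s i ∣ sExt s i) := by
  simp only [latticePoints, Set.mem_ofPred_eq, ← exists_intCast_eq_div_iff_dvd hk]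
  constructor
  · intro h
    refine ⟨fun hi₁ => ?_, fun hid => ?_⟩
    · simpa [dualVertex_apply, show i - 1 + 1 = i by omega] using h ⟨i - 1, by omega⟩
    · obtain ⟨n, hn⟩ := h ⟨i, hid⟩
      exact ⟨-n, by simp [dualVertex_apply] at hn; push_cast; linarith⟩
  · rintro ⟨h₁, h₂⟩ r
    rw [dualVertex_apply]
    split_ifs with hr hr'
    · exact h₁ (by omega)
    · obtain ⟨n, hn⟩ := h₂ (by omega)
      exact ⟨-n, by push_cast; linarith⟩
    · exact ⟨0, by simp⟩

lemma kCoeff_succ_of_lt {j : ℕ} (hj : j + 1 < d) :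
    kCoeff s (j + 1) =
      ((j : ℤ) + 2) * s ⟨j, by omega⟩ - ((j : ℤ) + 1) * s ⟨j + 1, hj⟩ := by
  rw [kCoeff, sExt_succ_of_lt (by omega), sExt_succ_of_lt hj]
  push_cast
  ring

section
variable (hd : 0 < d)
  (hstep : ∀ i : Fin d, ∀ hi : (i : ℕ) + 1 < d,
    s i ≤ s ⟨(i : ℕ) + 1, hi⟩ ∧ s ⟨(i : ℕ) + 1, hi⟩ - s i ≤ 1)
  (hlast : s ⟨d - 1, Nat.sub_lt hd Nat.one_pos⟩ = d + 1)
include hd hlast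

lemma sExt_self : sExt s d = d + 1 := by
  simp [sExt, hd.ne', hlast]

lemma kCoeff_self : kCoeff s d = d + 1 := by
  rw [kCoeff, sExt_self hd hlast, sExt_of_lt (by omega)]
  push_cast
  ring

include hstep

lemma sExt_succ_le {i : ℕ} (hi₁ : 1 ≤ i) (hid : i ≤ d) :
    sExt s (i + 1) ≤ sExt s i + 1 := by
  rcases hid.lt_or_eq with hid | rfl
  · obtain ⟨j, rfl⟩ : ∃ j, i = j + 1 := ⟨i - 1, by omega⟩
    have : s ⟨j + 1, hid⟩ - s ⟨j, by omega⟩ ≤ 1 := (hstep ⟨j, by omega⟩ hid).2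
    rw [sExt_succ_of_lt hid, sExt_succ_of_lt (by omega)]
    omega
  · rw [sExt_of_lt (by omega), sExt_self hd hlast]
    push_cast
    omega

lemma lt_sExt {i : ℕ} (hi₁ : 1 ≤ i) (hid : i ≤ d) : (i : ℤ) < sExt s i := by
  induction hid using Nat.decreasingInduction with
  | self => rw [sExt_self hd hlast]; omega
  | of_succ i hid ih =>
    have := sExt_succ_le hd hstep hlast hi₁ hid.le
    have := ih (by omega)
    push_cast at this
    omega

lemma kCoeff_pos {i : ℕ} (hi : i ≤ d) : 0 < kCoeff s i := by
  rcases Nat.eq_zero_or_pos i with rfl | hi₁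
  · simp [kCoeff, sExt_zero]
  have hle := mul_le_mul_of_nonneg_left (sExt_succ_le hd hstep hlast hi₁ hi)
    (Int.natCast_nonneg i)
  have hlt := lt_sExt hd hstep hlast hi₁ hi
  rw [kCoeff]
  linarith

lemma forall_dualVertex_mem_latticePoints_iff :
    (∀ i ≤ d, dualVertex s i ∈ latticePoints d) ↔
      ∀ i : Fin d, ∀ hi : (i : ℕ) + 1 < d,
        ((((i : ℕ) : ℤ) + 2) * (s i : ℤ) -
            (((i : ℕ) : ℤ) + 1) * (s ⟨(i : ℕ) + 1, hi⟩ : ℤ)) ∣ (s i : ℤ) ∧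
        ((((i : ℕ) : ℤ) + 2) * (s i : ℤ) -
            (((i : ℕ) : ℤ) + 1) * (s ⟨(i : ℕ) + 1, hi⟩ : ℤ)) ∣ (s ⟨(i : ℕ) + 1, hi⟩ : ℤ) := by
  have hk {i : ℕ} (hi : i ≤ d) := (kCoeff_pos hd hstep hlast hi).ne'
  constructor
  · intro h i hi
    have := (dualVertex_mem_latticePoints_iff hi.le (hk hi.le)).1 (h _ hi.le)
    rw [kCoeff_succ_of_lt hi, sExt_succ_of_lt hi, sExt_succ_of_lt i.isLt] at this
    exact ⟨this.2 hi, this.1 (by omega)⟩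
  · intro h i hi
    rw [dualVertex_mem_latticePoints_iff hi (hk hi)]
    rcases i with _ | j
    · exact ⟨by omega, fun _ => by simp [kCoeff, sExt_zero]⟩
    rcases (by omega : j + 1 < d ∨ j + 1 = d) with hj | rfl
    · rw [kCoeff_succ_of_lt hj, sExt_succ_of_lt hj, sExt_succ_of_lt (by omega : j < d)]
      exact ⟨fun _ => (h ⟨j, by omega⟩ hj).2, fun _ => (h ⟨j, by omega⟩ hj).1⟩
    · refine ⟨fun _ => ?_, by omega⟩
      rw [kCoeff_self hd hlast, sExt_of_lt (by omega)]
      push_cast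
      rfl

end

end LectureHall

/-- for weakly increasing `s` with steps at most 1 and
`s_d = d + 1`, with `Q = P_d^(s) - p` where `p = (1, 2, …, d)`, the dual `Q^∨`
is a lattice polytope iff `k_i = (i+1) s_i - i s_{i+1}` divides `s_i` and
`s_{i+1}` for all `1 ≤ i ≤ d-1`. -/
theorem stmt_11 (d : ℕ) (hd : 0 < d) (s : Fin d → ℕ) (hpos : ∀ i, 0 < s i)
    (hstep : ∀ i : Fin d, ∀ hi : (i : ℕ) + 1 < d,
      s i ≤ s ⟨(i : ℕ) + 1, hi⟩ ∧ s ⟨(i : ℕ) + 1, hi⟩ - s i ≤ 1)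
    (hlast : s ⟨d - 1, Nat.sub_lt hd Nat.one_pos⟩ = d + 1) :
    (dualPolytope ((fun x (j : Fin d) => x j - (((j : ℕ) : ℝ) + 1)) ''
          lectureHall d s) =
        convexHull ℝ
          (dualPolytope ((fun x (j : Fin d) => x j - (((j : ℕ) : ℝ) + 1)) ''
              lectureHall d s) ∩ latticePoints d)) ↔
      ∀ i : Fin d, ∀ hi : (i : ℕ) + 1 < d,
        ((((i : ℕ) : ℤ) + 2) * (s i : ℤ) - (((i : ℕ) : ℤ) + 1) * (s ⟨(i : ℕ) + 1, hi⟩ : ℤ))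
            ∣ (s i : ℤ) ∧
        ((((i : ℕ) : ℤ) + 2) * (s i : ℤ) - (((i : ℕ) : ℤ) + 1) * (s ⟨(i : ℕ) + 1, hi⟩ : ℤ))
            ∣ (s ⟨(i : ℕ) + 1, hi⟩ : ℤ) :=
  (LectureHall.dualPolytope_shifted_eq_convexHull_iff hd hpos
      fun _ => LectureHall.kCoeff_pos hd hstep hlast).trans
    (LectureHall.forall_dualVertex_mem_latticePoints_iff hd hstep hlast)
end

section
/- Let d ≥ 1 and let s = (s_1,…,s_d) be a monotone sequence of positive integers (that is, either s_1 ≤ s_2 ≤ ⋯ ≤ s_d or s_1 ≥ s_2 ≥ ⋯ ≥ s_d). Then the s-lecture hall polytope P_d^{(s)} satisfies the integer decomposition property: for every positive integer k and every lattice point z ∈ (k·P_d^{(s)}) ∩ ℤ^d there exist lattice points x_1, …, x_k ∈ P_d^{(s)} ∩ ℤ^d with x_1 + ⋯ + x_k = z. -/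
open Pointwise BigOperators

private lemma clamp_div_aux (u s c : ℝ) (hs : 0 < s) :
    min (max (u - c * s) 0) s / s = min (max (u / s - c) 0) 1 := by
  rw [← min_div_div_right hs.le, ← max_div_div_right hs.le, sub_div,
    mul_div_assoc, div_self hs.ne', mul_one, zero_div]

/-- for monotone `s`, the lecture hall polytope `P_d^(s)`
satisfies the integer decomposition property. -/
theorem stmt_12 (d : ℕ) (hd : 0 < d) (s : Fin d → ℕ) (hpos : ∀ i, 0 < s i)
    (hmono : Monotone s ∨ Antitone s) :
    HasIDP d (lectureHall d s) := by
  intro k hk z hz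
  have hsR : ∀ i, (0 : ℝ) < (s i : ℝ) := fun i => by exact_mod_cast hpos i
  have hkR : (0 : ℝ) < (k : ℝ) := by exact_mod_cast hk
  -- unpack the membership in k • P
  obtain ⟨y, hy, hyz⟩ := hz
  have hyi : ∀ i, y i = (z i : ℝ) / (k : ℝ) := by
    intro i
    have := congrFun hyz i
    simp only [Pi.smul_apply, smul_eq_mul] at this
    field_simp
    linarith [this]
  set r : Fin d → ℝ := fun i => (z i : ℝ) / (s i : ℝ) with hr
  have hys : ∀ i : Fin d, y i / (s i : ℝ) = r i / (k : ℝ) := by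
    intro i
    rw [hyi, hr, div_div, div_div, mul_comm]
  obtain ⟨hy0, hychain, hylast⟩ := hy
  have hr0 : 0 ≤ r ⟨0, hd⟩ := by
    have := hy0 hd; rw [hys] at this
    exact nonneg_of_mul_nonneg_right (by rwa [div_eq_mul_inv, mul_comm] at this) (by positivity)
  have hrchain : ∀ i : Fin d, ∀ hi : (i : ℕ) + 1 < d, r i ≤ r ⟨(i : ℕ) + 1, hi⟩ := by
    intro i hi
    have := hychain i hi
    rw [hys, hys] at this
    exact (div_le_div_iff_of_pos_right hkR).mp this
  have hrlast : r ⟨d - 1, Nat.sub_lt hd Nat.one_pos⟩ ≤ (k : ℝ) := by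
    have := hylast hd; rw [hys] at this
    calc r ⟨d - 1, Nat.sub_lt hd Nat.one_pos⟩
        = r ⟨d - 1, Nat.sub_lt hd Nat.one_pos⟩ / (k : ℝ) * (k : ℝ) := by
          field_simp
      _ ≤ 1 * (k : ℝ) := by exact mul_le_mul_of_nonneg_right this hkR.le
      _ = (k : ℝ) := one_mul _
  -- chain inequality between arbitrary indices
  have hchain : ∀ m n : ℕ, ∀ hm : m < d, m ≤ n → ∀ hn : n < d, r ⟨m, hm⟩ ≤ r ⟨n, hn⟩ := by
    intro m n hm hmn
    induction hmn with
    | refl => intro hn; exact le_rfl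
    | @step n' hmn ih =>
        intro hn
        have hn' : n' < d := Nat.lt_of_succ_lt hn
        exact (ih hn').trans (hrchain ⟨n', hn'⟩ hn)
  have hrnn : ∀ i : Fin d, 0 ≤ r i := fun i =>
    hr0.trans (hchain 0 i hd (Nat.zero_le _) i.isLt)
  have hrub : ∀ i : Fin d, r i ≤ (k : ℝ) :=
    fun i => (hchain i (d - 1) i.isLt (Nat.le_sub_one_of_lt i.isLt)
      (Nat.sub_lt hd Nat.one_pos)).trans hrlast
  -- integer bounds on z
  have hz0 : ∀ i, 0 ≤ z i := by
    intro i
    have h := mul_nonneg (hrnn i) (hsR i).le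
    rw [hr] at h
    simp only [div_mul_cancel₀ _ (hsR i).ne'] at h
    exact_mod_cast h
  have hzk : ∀ i, z i ≤ (k : ℤ) * (s i : ℤ) := by
    intro i
    have h := (div_le_iff₀ (hsR i)).mp (hrub i)
    exact_mod_cast h
  -- the decomposition
  refine ⟨fun j i => min (max (z i - (j : ℕ) * (s i : ℤ)) 0) (s i : ℤ), ?_, ?_⟩
  · intro j
    have hxd : ∀ i : Fin d,
        ((min (max (z i - (j : ℕ) * (s i : ℤ)) 0) (s i : ℤ) : ℤ) : ℝ) / (s i : ℝ)
          = min (max (r i - (j : ℕ)) 0) 1 := by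
      intro i
      rw [show ((min (max (z i - (j : ℕ) * (s i : ℤ)) 0) (s i : ℤ) : ℤ) : ℝ)
            = min (max ((z i : ℝ) - (j : ℕ) * (s i : ℝ)) 0) (s i : ℝ) by push_cast; ring_nf]
      exact clamp_div_aux _ _ _ (hsR i)
    refine ⟨?_, ?_, ?_⟩
    · intro h
      rw [hxd]
      exact le_min (le_max_right _ _) zero_le_one
    · intro i hi
      rw [hxd, hxd]
      exact min_le_min (max_le_max (by linarith [hrchain i hi]) le_rfl) le_rfl
    · intro h
      rw [hxd]
      exact min_le_right _ _
  · intro i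
    have hkey : ∀ m : ℤ, 0 ≤ m →
        min (max (z i - m) 0) (s i : ℤ) = min (z i) (m + (s i : ℤ)) - min (z i) m := by
      intro m hm
      have hs' : (0 : ℤ) < (s i : ℤ) := by exact_mod_cast hpos i
      omega
    calc (∑ j : Fin k, min (max (z i - (j : ℕ) * (s i : ℤ)) 0) (s i : ℤ))
        = ∑ j ∈ Finset.range k,
            (min (z i) (((j + 1 : ℕ) : ℤ) * (s i : ℤ)) - min (z i) (((j : ℕ) : ℤ) * (s i : ℤ))) := by
          rw [Fin.sum_univ_eq_sum_range
            (fun n : ℕ => min (max (z i - (n : ℤ) * (s i : ℤ)) 0) (s i : ℤ)) k]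
          refine Finset.sum_congr rfl fun j _ => ?_
          rw [hkey _ (mul_nonneg (Int.ofNat_nonneg j) (by exact_mod_cast (hpos i).le))]
          push_cast
          ring_nf
      _ = min (z i) (((k : ℕ) : ℤ) * (s i : ℤ)) - min (z i) (((0 : ℕ) : ℤ) * (s i : ℤ)) :=
          Finset.sum_range_sub (fun n : ℕ => min (z i) ((n : ℤ) * (s i : ℤ))) k
      _ = z i := by
          have h1 := hz0 i
          have h2 := hzk i
          simp only [Nat.cast_zero, zero_mul]
          omega
end

section
/- Let d ≥ 1, let s = (s_1,…,s_d) be a weakly increasing sequence of positive integers, and let k ≥ 2 be an integer. Then for every lattice point x ∈ (k·P_d^{(s)}) ∩ ℤ^d there exists a lattice point y ∈ P_d^{(s)} ∩ ℤ^d such that x − y ∈ ((k−1)·P_d^{(s)}) ∩ ℤ^d. -/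
open Pointwise BigOperators

/-- for weakly increasing `s` and `k ≥ 2`, every lattice point of
`k • P_d^(s)` is the sum of a lattice point of `P_d^(s)` and a lattice point of
`(k-1) • P_d^(s)`. -/
theorem stmt_13 (d : ℕ) (hd : 0 < d) (s : Fin d → ℕ) (hpos : ∀ i, 0 < s i)
    (hmono : Monotone s) (k : ℕ) (hk : 2 ≤ k) (x : Fin d → ℤ)
    (hx : (fun i => (x i : ℝ)) ∈ (k : ℝ) • lectureHall d s) :
    ∃ y : Fin d → ℤ, (fun i => (y i : ℝ)) ∈ lectureHall d s ∧
      (fun i => ((x i - y i : ℤ) : ℝ)) ∈ ((k : ℝ) - 1) • lectureHall d s := by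
  rw [Set.mem_smul_set] at hx
  obtain ⟨z, hz, hzx⟩ := hx
  have hs : ∀ i : Fin d, (0:ℝ) < (s i : ℝ) := fun i => by exact_mod_cast hpos i
  obtain ⟨h0, hchain, htop⟩ := hz
  have key : ∀ b, ∀ hb : b < d, ∀ a, ∀ ha : a < d, a ≤ b →
      z ⟨a, ha⟩ / (s ⟨a, ha⟩ : ℝ) ≤ z ⟨b, hb⟩ / (s ⟨b, hb⟩ : ℝ) := by
    intro b
    induction b with
    | zero =>
      intro hb a ha hab
      have : a = 0 := by omega
      subst this; exact le_rfl
    | succ n ih =>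
      intro hb a ha hab
      rcases Nat.lt_or_ge a (n+1) with h | h
      · have hn : n < d := by omega
        exact (ih hn a ha (by omega)).trans (hchain ⟨n, hn⟩ hb)
      · have : a = n+1 := by omega
        subst this; exact le_rfl
  have hv0 : ∀ i : Fin d, 0 ≤ z i / (s i : ℝ) := by
    intro i
    have h2 := key i.1 i.isLt 0 hd (Nat.zero_le _)
    simpa using (h0 hd).trans h2
  have hv1 : ∀ i : Fin d, z i / (s i : ℝ) ≤ 1 := by
    intro i
    have h2 := key (d-1) (Nat.sub_lt hd Nat.one_pos) i.1 i.isLt (by omega)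
    have h3 := htop hd
    simpa using h2.trans h3
  have hX : ∀ i, (x i : ℝ) = (k:ℝ) * z i := by
    intro i
    have := congrFun hzx i
    simpa using this.symm
  have hk2 : (2:ℝ) ≤ (k:ℝ) := by exact_mod_cast hk
  have hk1 : (0:ℝ) < (k:ℝ) - 1 := by linarith
  have hkpos : (0:ℝ) < (k:ℝ) := by linarith
  have hzsi : ∀ i, z i = (z i / (s i:ℝ)) * (s i:ℝ) := fun i =>
    (div_mul_cancel₀ _ (hs i).ne').symm
  set y : Fin d → ℤ := fun i => max 0 (x i - ((k:ℤ) - 1) * (s i : ℤ)) with hy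
  have hycast : ∀ i, ((y i : ℤ) : ℝ) / (s i : ℝ)
      = max 0 ((k:ℝ) * (z i / (s i:ℝ)) - ((k:ℝ) - 1)) := by
    intro i
    have : ((y i : ℤ) : ℝ) = max 0 ((x i:ℝ) - ((k:ℝ) - 1) * (s i:ℝ)) := by
      simp only [hy]
      push_cast [Int.cast_max]
      ring_nf
    rw [this, ← max_div_div_right (hs i).le, zero_div, hX i]
    congr 1
    rw [sub_div, mul_div_assoc, mul_div_cancel_right₀ _ (hs i).ne']
  have hwcast : ∀ i, (((x i - y i : ℤ)) : ℝ)
      = min ((k:ℝ) * (z i / (s i:ℝ))) ((k:ℝ) - 1) * (s i : ℝ) := by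
    intro i
    have hzz : (x i - y i : ℤ) = min (x i) (((k:ℤ) - 1) * (s i : ℤ)) := by
      simp only [hy]; omega
    rw [hzz]
    push_cast [Int.cast_min]
    rcases le_total ((k:ℝ) * (z i / (s i:ℝ))) ((k:ℝ) - 1) with h | h
    · rw [hX i, min_eq_left (by nlinarith [mul_le_mul_of_nonneg_right h (hs i).le, hzsi i]),
        min_eq_left h]
      linear_combination (k:ℝ) * hzsi i
    · rw [hX i, min_eq_right (by nlinarith [mul_le_mul_of_nonneg_right h (hs i).le, hzsi i]),
        min_eq_right h]
  refine ⟨y, ⟨?_, ?_, ?_⟩, ?_⟩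
  · intro h
    rw [hycast]
    exact le_max_left _ _
  · intro i hi
    rw [hycast, hycast]
    exact max_le_max le_rfl (by nlinarith [hchain i hi])
  · intro h
    rw [hycast]
    apply max_le (by norm_num)
    nlinarith [hv1 ⟨d - 1, Nat.sub_lt hd Nat.one_pos⟩]
  · rw [Set.mem_smul_set]
    refine ⟨fun i => min ((k:ℝ) * (z i / (s i:ℝ))) ((k:ℝ) - 1) * (s i : ℝ) / ((k:ℝ) - 1),
      ⟨?_, ?_, ?_⟩, ?_⟩
    · intro h
      have h1 := hv0 ⟨0, h⟩
      positivity
    · intro i hi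
      beta_reduce
      have hsimp : ∀ (m : ℝ) (j : Fin d),
          m * (s j : ℝ) / ((k:ℝ) - 1) / (s j : ℝ) = m / ((k:ℝ) - 1) := by
        intro m j; rw [mul_div_right_comm, mul_div_cancel_right₀ _ (hs j).ne']
      rw [hsimp, hsimp]
      apply div_le_div_of_nonneg_right ?_ hk1.le |>.trans le_rfl
      exact min_le_min (by nlinarith [hchain i hi]) le_rfl
    · intro h
      beta_reduce
      have hsimp : ∀ (m : ℝ) (j : Fin d),
          m * (s j : ℝ) / ((k:ℝ) - 1) / (s j : ℝ) = m / ((k:ℝ) - 1) := by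
        intro m j; rw [mul_div_right_comm, mul_div_cancel_right₀ _ (hs j).ne']
      rw [hsimp]
      rw [div_le_one hk1]
      exact min_le_right _ _
    · funext i
      rw [hwcast i]
      simp only [Pi.smul_apply, smul_eq_mul]
      field_simp
end

section
/- Let d, e ≥ 1, let s = (s_1,…,s_d) and t = (t_1,…,t_e) be sequences of positive integers, and let (s,t) = (s_1,…,s_d,t_1,…,t_e). Define the affine map φ : ℝ^{d+e} → ℝ^{d+e} by φ(x)_i = x_i for 1 ≤ i ≤ d and φ(x)_{d+j} = t_j − x_{d+j} for 1 ≤ j ≤ e. Then φ(P_{d+e}^{(s,t)}) = conv((P_d^{(s)} × {0}) ∪ ({0} × Q)), the free sum of P_d^{(s)} and Q, where Q = {y ∈ ℝ^e : 0 ≤ y_e/t_e ≤ y_{e−1}/t_{e−1} ≤ ⋯ ≤ y_1/t_1 ≤ 1} is the lecture hall polytope of the reversed sequence (t_e,…,t_1) with its coordinates listed in reverse order. In particular, P_{d+e}^{(s,t)} is unimodularly equivalent to the free sum P_d^{(s)} ⊕ Q. -/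
open Pointwise BigOperators

/-!
Under `φ` the chain `0 ≤ x₁/s₁ ≤ ⋯ ≤ x_d/s_d ≤ x_{d+1}/t₁ ≤ ⋯ ≤ x_{d+e}/t_e ≤ 1` becomes three
conditions on `(u, v) = φ(x)`: `u` lies in the lecture hall cone `0 ≤ u₁/s₁ ≤ ⋯ ≤ u_d/s_d`, `v` in
the reversed cone `0 ≤ v_e/t_e ≤ ⋯ ≤ v₁/t₁`, and the two blocks are coupled by the single inequality
`u_d/s_d + v₁/t₁ ≤ 1`. This is the free sum of the truncations `{u_d/s_d ≤ 1}` and `{v₁/t₁ ≤ 1}`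
of the two cones: a point with `u_d/s_d = α > 0`, `v₁/t₁ = β > 0` and `α + β ≤ 1` is the convex
combination `(1 - β) • (u/(1 - β), 0) + β • (0, v/β)`, and the linear forms vanish on the cones
only at `0`, which settles the boundary cases. Finally `φ` is a change of sign of some coordinates
followed by an integer translation, hence unimodular.
-/

theorem Fin.monotone_iff_le_next {α : Type*} [Preorder α] {d : ℕ} (f : Fin d → α) :
    Monotone f ↔ ∀ (i : Fin d) (hi : (i : ℕ) + 1 < d), f i ≤ f ⟨i + 1, hi⟩ := by
  cases d with
  | zero => exact ⟨fun _ i => i.elim0, fun _ => Subsingleton.monotone f⟩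
  | succ n =>
    rw [Fin.monotone_iff_le_succ]
    exact ⟨fun h i hi => h ⟨i, by omega⟩, fun h i => h i.castSucc (by simp)⟩

theorem Fin.monotone_append_iff {α : Type*} [Preorder α] {m n : ℕ} (a : Fin m → α)
    (b : Fin n → α) :
    Monotone (Fin.append a b) ↔ Monotone a ∧ Monotone b ∧ ∀ i j, a i ≤ b j := by
  refine ⟨fun h => ⟨fun i i' hi => ?_, fun j j' hj => ?_, fun i j => ?_⟩, ?_⟩
  · simpa using @h (castAdd n i) (castAdd n i') hi
  · simpa using @h (natAdd m j) (natAdd m j') ((natAdd_le_natAdd_iff m).2 hj)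
  · simpa using @h (castAdd n i) (natAdd m j) (Fin.le_def.2 (by simp; omega))
  · rintro ⟨ha, hb, hab⟩ k k' hk
    induction k using Fin.addCases with
    | left i =>
      induction k' using Fin.addCases with
      | left i' => simpa using ha hk
      | right j' => simpa using hab i j'
    | right j =>
      induction k' using Fin.addCases with
      | left i' => exact absurd hk (not_le.2 (Fin.lt_def.2 (by simp; omega)))
      | right j' => simpa using hb ((natAdd_le_natAdd_iff m).1 hk)

theorem Fin.monotone_comp_rev_iff {α : Type*} [Preorder α] {n : ℕ} {f : Fin n → α} :
    Monotone (f ∘ Fin.rev) ↔ Antitone f :=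
  ⟨fun h => by simpa [Function.comp_def] using Monotone.comp_antitone h Fin.rev_anti,
    fun h => h.comp Fin.rev_anti⟩

theorem Fin.append_nonneg_iff {α : Type*} [Preorder α] [Zero α] {m n : ℕ} {a : Fin m → α}
    {b : Fin n → α} : 0 ≤ Fin.append a b ↔ 0 ≤ a ∧ 0 ≤ b := by
  simp [Pi.le_def, Fin.forall_fin_add]

theorem Fin.append_le_one_iff {α : Type*} [Preorder α] [One α] {m n : ℕ} {a : Fin m → α}
    {b : Fin n → α} : Fin.append a b ≤ 1 ↔ a ≤ 1 ∧ b ≤ 1 := by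
  simp [Pi.le_def, Fin.forall_fin_add]

def Fin.appendLinearMap (R M : Type*) [Semiring R] [AddCommMonoid M] [Module R M] (m n : ℕ) :
    (Fin m → M) × (Fin n → M) →ₗ[R] Fin (m + n) → M where
  toFun p := Fin.append p.1 p.2
  map_add' p q := by funext k; induction k using Fin.addCases <;> simp
  map_smul' c p := by funext k; induction k using Fin.addCases <;> simp

section FreeSum

variable {E F G : Type*} [AddCommGroup E] [Module ℝ E] [AddCommGroup F] [Module ℝ F]
  [AddCommGroup G] [Module ℝ G]

theorem convex_setOf_mem_mem_add_le_one (C : PointedCone ℝ E) (D : PointedCone ℝ F)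
    (f : E →ₗ[ℝ] ℝ) (g : F →ₗ[ℝ] ℝ) :
    Convex ℝ {p : E × F | p.1 ∈ C ∧ p.2 ∈ D ∧ f p.1 + g p.2 ≤ 1} := by
  rintro ⟨x, y⟩ ⟨hx, hy, hxy⟩ ⟨x', y'⟩ ⟨hx', hy', hxy'⟩ a b ha hb hab
  refine ⟨C.add_mem (C.smul_mem ha hx) (C.smul_mem hb hx'),
    D.add_mem (D.smul_mem ha hy) (D.smul_mem hb hy'), ?_⟩
  simp only [Prod.fst_add, Prod.snd_add, Prod.smul_fst, Prod.smul_snd, map_add, map_smul,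
    smul_eq_mul]
  nlinarith

theorem convexHull_image_union_image_eq_image_coprod (C : PointedCone ℝ E) (D : PointedCone ℝ F)
    {f : E →ₗ[ℝ] ℝ} {g : F →ₗ[ℝ] ℝ} (hf : ∀ x ∈ C, x ≠ 0 → 0 < f x)
    (hg : ∀ y ∈ D, y ≠ 0 → 0 < g y) (i : E →ₗ[ℝ] G) (j : F →ₗ[ℝ] G) :
    convexHull ℝ (i '' {x | x ∈ C ∧ f x ≤ 1} ∪ j '' {y | y ∈ D ∧ g y ≤ 1}) =
      i.coprod j '' {p | p.1 ∈ C ∧ p.2 ∈ D ∧ f p.1 + g p.2 ≤ 1} := by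
  apply subset_antisymm
  · refine convexHull_min ?_ ((convex_setOf_mem_mem_add_le_one C D f g).linear_image _)
    rintro _ (⟨x, ⟨hx, hfx⟩, rfl⟩ | ⟨y, ⟨hy, hgy⟩, rfl⟩)
    · exact ⟨(x, 0), ⟨hx, D.zero_mem, by simpa using hfx⟩, by simp⟩
    · exact ⟨(0, y), ⟨C.zero_mem, hy, by simpa using hgy⟩, by simp⟩
  · rintro _ ⟨⟨x, y⟩, ⟨hx, hy, hxy⟩, rfl⟩
    simp only [LinearMap.coprod_apply] at hxy ⊢
    rcases eq_or_ne y 0 with rfl | hy0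
    · exact subset_convexHull ℝ _ (.inl ⟨x, ⟨hx, by simpa using hxy⟩, by simp⟩)
    rcases eq_or_ne x 0 with rfl | hx0
    · exact subset_convexHull ℝ _ (.inr ⟨y, ⟨hy, by simpa using hxy⟩, by simp⟩)
    have hfx := hf x hx hx0
    have hgy := hg y hy hy0
    set β := g y
    have hβ : 0 < 1 - β := by linarith
    have hsplit : i x + j y = (1 - β) • i ((1 - β)⁻¹ • x) + β • j (β⁻¹ • y) := by
      simp only [map_smul, smul_smul, mul_inv_cancel₀ hβ.ne', mul_inv_cancel₀ hgy.ne', one_smul]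
    rw [hsplit]
    refine convex_convexHull ℝ _ (subset_convexHull ℝ _ (.inl ⟨_, ⟨?_, ?_⟩, rfl⟩))
      (subset_convexHull ℝ _ (.inr ⟨_, ⟨?_, ?_⟩, rfl⟩)) hβ.le hgy.le (by ring)
    · exact C.smul_mem (inv_nonneg.2 hβ.le) hx
    · rw [map_smul, smul_eq_mul, inv_mul_le_one₀ hβ]
      linarith
    · exact D.smul_mem (inv_nonneg.2 hgy.le) hy
    · rw [map_smul, smul_eq_mul, inv_mul_cancel₀ hgy.ne']

end FreeSum

section LectureHallCone

variable {d : ℕ}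

noncomputable def lectureHallRatio (s : Fin d → ℕ) : (Fin d → ℝ) →ₗ[ℝ] Fin d → ℝ :=
  LinearMap.pi fun i => (s i : ℝ)⁻¹ • LinearMap.proj i

@[simp]
theorem lectureHallRatio_apply (s : Fin d → ℕ) (x : Fin d → ℝ) (i : Fin d) :
    lectureHallRatio s x i = x i / s i := by
  simp [lectureHallRatio, div_eq_inv_mul]

theorem lectureHall_eq_setOf (s : Fin d → ℕ) :
    lectureHall d s = {x | 0 ≤ lectureHallRatio s x ∧ Monotone (lectureHallRatio s x) ∧
      lectureHallRatio s x ≤ 1} := by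
  ext x
  simp only [lectureHall, Set.mem_ofPred_eq, Fin.monotone_iff_le_next, ← lectureHallRatio_apply]
  refine ⟨fun ⟨h0, hmono, h1⟩ => ⟨fun i => ?_, hmono, fun i => ?_⟩,
    fun ⟨h0, hmono, h1⟩ => ⟨fun _ => h0 _, hmono, fun _ => h1 _⟩⟩
  · exact (h0 i.pos).trans ((Fin.monotone_iff_le_next _).2 hmono (Nat.zero_le i))
  · exact ((Fin.monotone_iff_le_next _).2 hmono (Nat.le_sub_one_of_lt i.isLt)).trans (h1 i.pos)

def lectureHallCone (s : Fin d → ℕ) : PointedCone ℝ (Fin d → ℝ) where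
  carrier := {x | 0 ≤ lectureHallRatio s x ∧ Monotone (lectureHallRatio s x)}
  add_mem' := fun ⟨hx, hx'⟩ ⟨hy, hy'⟩ => by
    simp only [Set.mem_ofPred_eq, map_add]
    exact ⟨add_nonneg hx hy, hx'.add hy'⟩
  zero_mem' := ⟨by simp, fun _ _ _ => by simp⟩
  smul_mem' := fun ⟨c, hc⟩ x ⟨hx, hx'⟩ => by
    show 0 ≤ lectureHallRatio s (c • x) ∧ Monotone (lectureHallRatio s (c • x))
    rw [map_smul]
    exact ⟨smul_nonneg hc hx, hx'.const_smul hc⟩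

end LectureHallCone

section Truncation

variable {n : ℕ}

noncomputable def lectureHallTop (s : Fin (n + 1) → ℕ) : (Fin (n + 1) → ℝ) →ₗ[ℝ] ℝ :=
  LinearMap.proj (Fin.last n) ∘ₗ lectureHallRatio s

theorem lectureHall_eq_setOf_mem_cone (s : Fin (n + 1) → ℕ) :
    lectureHall (n + 1) s = {x | x ∈ lectureHallCone s ∧ lectureHallTop s x ≤ 1} := by
  rw [lectureHall_eq_setOf]
  ext x
  exact ⟨fun ⟨h0, hmono, h1⟩ => ⟨⟨h0, hmono⟩, h1 _⟩,
    fun ⟨⟨h0, hmono⟩, h1⟩ => ⟨h0, hmono, fun i => (hmono (Fin.le_last i)).trans h1⟩⟩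

theorem lectureHallTop_pos {s : Fin (n + 1) → ℕ} (hs : ∀ i, 0 < s i) :
    ∀ x ∈ lectureHallCone s, x ≠ 0 → 0 < lectureHallTop s x := by
  rintro x ⟨h0, hmono⟩ hx
  contrapose! hx
  funext i
  have hi : lectureHallRatio s x i = 0 := le_antisymm ((hmono (Fin.le_last i)).trans hx) (h0 i)
  simpa [(hs i).ne'] using hi

noncomputable def lectureHallRevCone (t : Fin (n + 1) → ℕ) : PointedCone ℝ (Fin (n + 1) → ℝ) :=
  (lectureHallCone (t ∘ Fin.rev)).comap (LinearMap.funLeft ℝ ℝ Fin.rev)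

noncomputable def lectureHallRevTop (t : Fin (n + 1) → ℕ) : (Fin (n + 1) → ℝ) →ₗ[ℝ] ℝ :=
  lectureHallTop (t ∘ Fin.rev) ∘ₗ LinearMap.funLeft ℝ ℝ Fin.rev

theorem mem_lectureHallRevCone {t : Fin (n + 1) → ℕ} {y : Fin (n + 1) → ℝ} :
    y ∈ lectureHallRevCone t ↔ 0 ≤ lectureHallRatio t y ∧ Antitone (lectureHallRatio t y) := by
  have hrev : lectureHallRatio (t ∘ Fin.rev) (y ∘ Fin.rev) = lectureHallRatio t y ∘ Fin.rev := by
    funext j; simp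
  show 0 ≤ lectureHallRatio (t ∘ Fin.rev) (y ∘ Fin.rev) ∧
    Monotone (lectureHallRatio (t ∘ Fin.rev) (y ∘ Fin.rev)) ↔ _
  rw [hrev, Fin.monotone_comp_rev_iff]
  exact and_congr_left' ⟨fun h i => by simpa using h i.rev, fun h i => h i.rev⟩

theorem lectureHallRevTop_apply (t : Fin (n + 1) → ℕ) (y : Fin (n + 1) → ℝ) :
    lectureHallRevTop t y = lectureHallRatio t y 0 := by
  simp [lectureHallRevTop, lectureHallTop, LinearMap.funLeft]

theorem lectureHallRevTop_pos {t : Fin (n + 1) → ℕ} (ht : ∀ j, 0 < t j) :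
    ∀ y ∈ lectureHallRevCone t, y ≠ 0 → 0 < lectureHallRevTop t y := by
  refine fun y hy hy0 => lectureHallTop_pos (fun j => ht _) _ hy fun h => hy0 ?_
  exact LinearMap.funLeft_injective_of_surjective _ _ _ Fin.rev_surjective
    (h.trans (map_zero _).symm)

theorem setOf_rev_mem_lectureHall (t : Fin (n + 1) → ℕ) :
    {y : Fin (n + 1) → ℝ |
        (fun j => y (Fin.rev j)) ∈ lectureHall (n + 1) (fun j => t (Fin.rev j))} =
      {y | y ∈ lectureHallRevCone t ∧ lectureHallRevTop t y ≤ 1} := by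
  simp only [lectureHall_eq_setOf_mem_cone]
  rfl

end Truncation

section Reflection

variable {d e : ℕ}

def lectureHallReflection (t : Fin e → ℕ) (x : Fin (d + e) → ℝ) : Fin (d + e) → ℝ :=
  fun i => if h : (i : ℕ) < d then x i
    else (t ⟨(i : ℕ) - d, Nat.sub_lt_left_of_lt_add (not_lt.1 h) i.isLt⟩ : ℝ) - x i

theorem lectureHallReflection_append (t : Fin e → ℕ) (u : Fin d → ℝ) (v : Fin e → ℝ) :
    lectureHallReflection t (Fin.append u v) = Fin.append u (fun j => t j - v j) := by
  funext k
  induction k using Fin.addCases <;> simp [lectureHallReflection]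

theorem lectureHallReflection_involutive (t : Fin e → ℕ) :
    Function.Involutive (lectureHallReflection (d := d) t) := by
  intro x
  obtain ⟨⟨u, v⟩, rfl⟩ : ∃ p : _ × _, Fin.append p.1 p.2 = x := (Fin.appendEquiv d e).surjective x
  simp [lectureHallReflection_append]

theorem lectureHallRatio_append (s : Fin d → ℕ) (t : Fin e → ℕ) (u : Fin d → ℝ)
    (v : Fin e → ℝ) :
    lectureHallRatio (Fin.append s t) (Fin.append u v) =
      Fin.append (lectureHallRatio s u) (lectureHallRatio t v) := by
  funext k
  induction k using Fin.addCases <;> simp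

theorem lectureHallRatio_sub {t : Fin e → ℕ} (ht : ∀ j, 0 < t j) (v : Fin e → ℝ) :
    lectureHallRatio t (fun j => t j - v j) = 1 - lectureHallRatio t v := by
  funext j
  have : (t j : ℝ) ≠ 0 := by exact_mod_cast (ht j).ne'
  simp [sub_div, div_self this]

end Reflection

section Image

variable {n m : ℕ}

theorem nonneg_monotone_le_one_append_one_sub_iff (ρ : Fin (n + 1) → ℝ) (σ : Fin (m + 1) → ℝ) :
    (0 ≤ Fin.append ρ (1 - σ) ∧ Monotone (Fin.append ρ (1 - σ)) ∧ Fin.append ρ (1 - σ) ≤ 1) ↔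
      (0 ≤ ρ ∧ Monotone ρ) ∧ (0 ≤ σ ∧ Antitone σ) ∧ ρ (Fin.last n) + σ 0 ≤ 1 := by
  rw [Fin.append_nonneg_iff, Fin.append_le_one_iff, Fin.monotone_append_iff]
  simp only [Pi.le_def, Pi.sub_apply, Pi.zero_apply, Pi.one_apply]
  constructor
  · rintro ⟨⟨hρ0, -⟩, ⟨hρ, hσ, hcross⟩, -, hσ0⟩
    exact ⟨⟨hρ0, hρ⟩, ⟨fun j => by linarith [hσ0 j], fun j j' h => (sub_le_sub_iff_left 1).1 (hσ h)⟩,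
      by linarith [hcross (Fin.last n) 0]⟩
  · rintro ⟨⟨hρ0, hρ⟩, ⟨hσ0, hσ⟩, htop⟩
    have hρ1 : ∀ i, ρ i + σ 0 ≤ 1 := fun i => by linarith [hρ (Fin.le_last i)]
    refine ⟨⟨hρ0, fun j => ?_⟩, ⟨hρ, fun j j' h => ?_, fun i j => ?_⟩, fun i => ?_, fun j => ?_⟩
    · linarith [hσ (Fin.zero_le j), hρ0 (Fin.last n)]
    · exact sub_le_sub_left (hσ h) 1
    · linarith [hσ (Fin.zero_le j), hρ1 i]
    · linarith [hσ0 0, hρ1 i]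
    · linarith [hσ0 j]

theorem lectureHallReflection_append_mem_lectureHall_iff (s : Fin (n + 1) → ℕ)
    {t : Fin (m + 1) → ℕ} (ht : ∀ j, 0 < t j) (u : Fin (n + 1) → ℝ) (v : Fin (m + 1) → ℝ) :
    lectureHallReflection t (Fin.append u v) ∈ lectureHall (n + 1 + (m + 1)) (Fin.append s t) ↔
      u ∈ lectureHallCone s ∧ v ∈ lectureHallRevCone t ∧
        lectureHallTop s u + lectureHallRevTop t v ≤ 1 := by
  rw [lectureHallReflection_append, lectureHall_eq_setOf, Set.mem_ofPred_eq,
    lectureHallRatio_append, lectureHallRatio_sub ht, mem_lectureHallRevCone,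
    lectureHallRevTop_apply]
  exact nonneg_monotone_le_one_append_one_sub_iff _ _

theorem image_lectureHallReflection (s : Fin (n + 1) → ℕ) {t : Fin (m + 1) → ℕ}
    (ht : ∀ j, 0 < t j) :
    lectureHallReflection t '' lectureHall (n + 1 + (m + 1)) (Fin.append s t) =
      Fin.appendLinearMap ℝ ℝ _ _ '' {p | p.1 ∈ lectureHallCone s ∧ p.2 ∈ lectureHallRevCone t ∧
        lectureHallTop s p.1 + lectureHallRevTop t p.2 ≤ 1} := by
  rw [(lectureHallReflection_involutive t).image_eq_preimage_symm]
  ext x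
  obtain ⟨⟨u, v⟩, rfl⟩ : ∃ p : _ × _, Fin.append p.1 p.2 = x := (Fin.appendEquiv _ _).surjective x
  rw [Set.mem_preimage, lectureHallReflection_append_mem_lectureHall_iff s ht]
  have hinj : Function.Injective (Fin.appendLinearMap ℝ ℝ (n + 1) (m + 1)) :=
    (Fin.appendEquiv _ _).injective
  exact ⟨fun h => ⟨_, h, rfl⟩, fun ⟨p, hp, hpx⟩ => hinj hpx ▸ hp⟩

end Image

theorem unimodularlyEquivalent_image_of_apply_eq {d : ℕ} (P : Set (Fin d → ℝ))
    {f : (Fin d → ℝ) → Fin d → ℝ} (ε : Fin d → ℤˣ) (w : Fin d → ℤ)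
    (hf : ∀ x i, f x i = ((ε i : ℤ) : ℝ) * x i + w i) :
    UnimodularlyEquivalent P (f '' P) := by
  refine ⟨Matrix.diagonal fun i => (ε i : ℤ), w, ?_, ?_⟩
  · rw [Matrix.det_diagonal, ← Units.coe_prod]
    exact Int.units_eq_one_or _ |>.imp (congrArg _) (congrArg _)
  · congr 1
    funext x i
    rw [hf, Matrix.diagonal_map (by simp), Pi.add_apply, Matrix.vecMul_diagonal]
    simp [mul_comm]

/-- the affine map `φ` fixing the first `d` coordinates and
sending `x_{d+j} ↦ t_j - x_{d+j}` maps `P_{d+e}^{(s,t)}` onto the free sum of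
`P_d^(s)` and the lecture hall polytope `Q` of the reversed sequence
`(t_e, …, t_1)` with its coordinates listed in reverse order; in particular
`P_{d+e}^{(s,t)}` is unimodularly equivalent to this free sum. -/
theorem stmt_15 (d e : ℕ) (hd : 0 < d) (he : 0 < e)
    (s : Fin d → ℕ) (t : Fin e → ℕ) (hs : ∀ i, 0 < s i) (ht : ∀ j, 0 < t j) :
    ((fun (x : Fin (d + e) → ℝ) (i : Fin (d + e)) =>
        if h : (i : ℕ) < d then x i
        else (t ⟨(i : ℕ) - d, by have := i.isLt; omega⟩ : ℝ) - x i) ''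
          lectureHall (d + e) (Fin.append s t) =
      convexHull ℝ
        (((fun x : Fin d → ℝ => Fin.append x (0 : Fin e → ℝ)) '' lectureHall d s) ∪
         ((fun y : Fin e → ℝ => Fin.append (0 : Fin d → ℝ) y) ''
           {y : Fin e → ℝ | (fun j : Fin e => y (Fin.rev j)) ∈
              lectureHall e (fun j : Fin e => t (Fin.rev j))}))) ∧
    UnimodularlyEquivalent (lectureHall (d + e) (Fin.append s t))
      (convexHull ℝ
        (((fun x : Fin d → ℝ => Fin.append x (0 : Fin e → ℝ)) '' lectureHall d s) ∪
         ((fun y : Fin e → ℝ => Fin.append (0 : Fin d → ℝ) y) ''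
           {y : Fin e → ℝ | (fun j : Fin e => y (Fin.rev j)) ∈
              lectureHall e (fun j : Fin e => t (Fin.rev j))}))) := by
  obtain ⟨n, rfl⟩ := Nat.exists_eq_add_one_of_ne_zero hd.ne'
  obtain ⟨m, rfl⟩ := Nat.exists_eq_add_one_of_ne_zero he.ne'
  set L := Fin.appendLinearMap ℝ ℝ (n + 1) (m + 1)
  have hfree := convexHull_image_union_image_eq_image_coprod _ _ (lectureHallTop_pos hs)
    (lectureHallRevTop_pos ht) (L ∘ₗ LinearMap.inl ℝ _ _) (L ∘ₗ LinearMap.inr ℝ _ _)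
  rw [← LinearMap.comp_coprod, LinearMap.coprod_inl_inr, LinearMap.comp_id,
    ← lectureHall_eq_setOf_mem_cone, ← setOf_rev_mem_lectureHall,
    ← image_lectureHallReflection s ht] at hfree
  -- `hfree` is the first claim once `L ∘ₗ inl`, `L ∘ₗ inr` and `lectureHallReflection` are unfolded
  refine ⟨hfree.symm, hfree ▸ unimodularlyEquivalent_image_of_apply_eq _
    (Fin.append (fun _ => 1) (fun _ => -1)) (Fin.append 0 fun j => (t j : ℤ)) fun x k => ?_⟩
  obtain ⟨⟨u, v⟩, rfl⟩ : ∃ p : _ × _, Fin.append p.1 p.2 = x := (Fin.appendEquiv _ _).surjective x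
  rw [lectureHallReflection_append]
  induction k using Fin.addCases <;> simp [sub_eq_neg_add]
end

section
/- Let d, e ≥ 1 and let s = (s_1,…,s_d) and t = (t_1,…,t_e) be sequences of positive integers such that both P_d^{(s)} and P_e^{(t)} satisfy the integer decomposition property. Then the (d+e+1)-dimensional lecture hall polytope P_{d+e+1}^{(s_1,…,s_d,1,t_1,…,t_e)} of the concatenated sequence (s_1,…,s_d,1,t_1,…,t_e) also satisfies the integer decomposition property. -/
open Pointwise BigOperators

/-! Write a lattice point of `k • P(s, 1, t)` as `(a, m, b)`. Since the middle entry of the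
sequence is `1`, the ratios `a_i / s_i ≤ m ≤ b_j / t_j` force the integer `m` into `[0, k]`, and
the point lies in `k • P(s, 1, t)` exactly when `a ∈ m • P(s)` and `b - m t ∈ (k - m) • P(t)`.
Decompose `a` into `m` lattice points `a_j` of `P(s)` and `b - m t` into `k - m` lattice points
`b_l` of `P(t)`; then the points `(a_j, 1, t)` and `(0, 0, b_l)` of `P(s, 1, t)` sum to
`(a, m, b)`. -/

namespace Fin

theorem castAdd_lt_natAdd {m n : ℕ} (i : Fin m) (j : Fin n) : castAdd n i < natAdd m j := by
  simp only [lt_def, val_castAdd, val_natAdd]; omega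

variable {α : Type*} [Preorder α] {m n : ℕ}

theorem monotone_snoc_iff {f : Fin n → α} {a : α} :
    Monotone (snoc f a : Fin (n + 1) → α) ↔ Monotone f ∧ ∀ i, f i ≤ a := by
  refine ⟨fun h => ⟨fun i j hij => ?_, fun i => ?_⟩, fun ⟨hf, ha⟩ i j hij => ?_⟩
  · simpa using h (castSucc_le_castSucc_iff.mpr hij)
  · simpa using h (castSucc_lt_last i).le
  · induction j using lastCases with
    | last => induction i using lastCases <;> simp [ha]
    | cast j =>
      induction i using lastCases with
      | last => exact absurd hij (not_le.mpr (castSucc_lt_last j))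
      | cast i => simpa using hf (castSucc_le_castSucc_iff.mp hij)

theorem monotone_append_iff_s18 {f : Fin m → α} {g : Fin n → α} :
    Monotone (append f g) ↔ Monotone f ∧ Monotone g ∧ ∀ i j, f i ≤ g j := by
  refine ⟨fun h => ⟨fun i j hij => ?_, fun i j hij => ?_, fun i j => ?_⟩,
    fun ⟨hf, hg, hfg⟩ i j hij => ?_⟩
  · simpa using h ((strictMono_castAdd n).le_iff_le.mpr hij)
  · simpa using h ((natAdd_le_natAdd_iff m).mpr hij)
  · simpa using h (castAdd_lt_natAdd i j).le
  · induction j using addCases with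
    | left j =>
      induction i using addCases with
      | left i => simpa using hf ((strictMono_castAdd n).le_iff_le.mp hij)
      | right i => exact absurd hij (not_le.mpr (castAdd_lt_natAdd j i))
    | right j =>
      induction i using addCases with
      | left i => simpa using hfg i j
      | right i => simpa using hg ((natAdd_le_natAdd_iff m).mp hij)

theorem monotone_iff_le_next_s18 {f : Fin n → α} :
    Monotone f ↔ ∀ (i : Fin n) (hi : (i : ℕ) + 1 < n), f i ≤ f ⟨i + 1, hi⟩ := by
  cases n with
  | zero => exact ⟨fun _ i => i.elim0, fun _ i => i.elim0⟩
  | succ n =>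
    rw [monotone_iff_le_succ]
    exact ⟨fun h i hi => h ⟨i, by omega⟩, fun h i => h i.castSucc (by simp)⟩

theorem comp_append {β γ : Type*} (g : β → γ) (xs : Fin m → β) (ys : Fin n → β) :
    g ∘ append xs ys = append (g ∘ xs) (g ∘ ys) := by
  funext i
  induction i using addCases <;> simp

end Fin

theorem mem_lectureHall_iff {n : ℕ} {u : Fin n → ℕ} {x : Fin n → ℝ} :
    x ∈ lectureHall n u ↔
      Monotone (fun i => x i / u i) ∧ ∀ i, 0 ≤ x i / u i ∧ x i / u i ≤ 1 := by
  rw [Fin.monotone_iff_le_next_s18]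
  refine ⟨fun ⟨h0, hmono, hlast⟩ => ⟨hmono, fun i => ⟨?_, ?_⟩⟩,
    fun ⟨hmono, hbd⟩ => ⟨fun h => (hbd _).1, hmono, fun h => (hbd _).2⟩⟩
  · refine (h0 i.pos).trans ?_
    exact (Fin.monotone_iff_le_next_s18.mpr hmono) (Fin.mk_le_of_le_val (Nat.zero_le _))
  · refine le_trans ?_ (hlast i.pos)
    exact (Fin.monotone_iff_le_next_s18.mpr hmono) (Fin.le_def.mpr (by simp; omega))

theorem zero_mem_lectureHall (n : ℕ) (u : Fin n → ℕ) : 0 ∈ lectureHall n u := by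
  simp [mem_lectureHall_iff, monotone_const]

theorem mem_smul_lectureHall_iff {n : ℕ} {u : Fin n → ℕ} (hu : ∀ i, 0 < u i) {c : ℝ}
    (hc : 0 ≤ c) {x : Fin n → ℝ} :
    x ∈ c • lectureHall n u ↔
      Monotone (fun i => x i / u i) ∧ ∀ i, 0 ≤ x i / u i ∧ x i / u i ≤ c := by
  rcases hc.eq_or_lt with rfl | hc
  · rw [Set.zero_smul_set ⟨0, zero_mem_lectureHall n u⟩, Set.mem_zero]
    refine ⟨by rintro rfl; simp [monotone_const], fun ⟨_, hbd⟩ => funext fun i => ?_⟩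
    have hui : (u i : ℝ) ≠ 0 := by have := hu i; positivity
    simpa [hui] using le_antisymm (hbd i).2 (hbd i).1
  · have hc' : 0 < c⁻¹ := inv_pos.mpr hc
    rw [Set.mem_smul_set_iff_inv_smul_mem₀ hc.ne', mem_lectureHall_iff]
    simp only [Pi.smul_apply, smul_eq_mul, mul_div_assoc, mul_nonneg_iff_of_pos_left hc',
      inv_mul_le_iff₀ hc, mul_one]
    refine and_congr_left' ⟨fun h i j hij => (mul_le_mul_iff_right₀ hc').mp (h hij),
      fun h => h.const_mul hc'.le⟩

theorem HasIDP.exists_sum_eq {d : ℕ} {P : Set (Fin d → ℝ)} (hP : HasIDP d P) (k : ℕ)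
    (z : Fin d → ℤ) (hz : Int.cast ∘ z ∈ (k : ℝ) • P) :
    ∃ x : Fin k → Fin d → ℤ, (∀ j, Int.cast ∘ x j ∈ P) ∧ ∑ j, x j = z := by
  rcases k.eq_zero_or_pos with rfl | hk
  · refine ⟨Fin.elim0, fun j => j.elim0, funext fun i => ?_⟩
    have hz0 := congrFun (Set.zero_smul_set_subset P (by simpa using hz)) i
    simp only [Function.comp_apply, Pi.zero_apply, Int.cast_eq_zero] at hz0
    simp [hz0]
  · obtain ⟨x, hx, hsum⟩ := hP k hk z hz
    exact ⟨x, hx, funext fun i => by simpa using hsum i⟩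

section Concatenation

variable {d e : ℕ} {s : Fin d → ℕ} {t : Fin e → ℕ}

theorem div_append_snoc (a : Fin d → ℝ) (m : ℝ) (b : Fin e → ℝ) :
    (fun i => Fin.append (Fin.snoc a m) b i / (Fin.append (Fin.snoc s 1) t i : ℕ)) =
      Fin.append (Fin.snoc (fun i => a i / s i) m) (fun j => b j / t j) := by
  funext i
  induction i using Fin.addCases with
  | left i => induction i using Fin.lastCases <;> simp
  | right j => simp

theorem append_snoc_mem_smul_lectureHall_iff (hs : ∀ i, 0 < s i) (ht : ∀ j, 0 < t j)
    {c : ℝ} (hc : 0 ≤ c) {a : Fin d → ℝ} {m : ℝ} {b : Fin e → ℝ} :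
    Fin.append (Fin.snoc a m) b ∈ c • lectureHall (d + 1 + e) (Fin.append (Fin.snoc s 1) t) ↔
      0 ≤ m ∧ m ≤ c ∧ a ∈ m • lectureHall d s ∧
        (fun j => b j - m * t j) ∈ (c - m) • lectureHall e t := by
  have hu : ∀ i, 0 < Fin.append (Fin.snoc s 1) t i := by
    refine Fin.addCases (fun i => ?_) (fun j => by simp [ht])
    induction i using Fin.lastCases <;> simp [hs]
  have hsub : ∀ j, (b j - m * t j) / t j = b j / t j - m := fun j => by
    have := ht j; field_simp
  rw [mem_smul_lectureHall_iff hu hc, div_append_snoc, Fin.monotone_append_iff_s18,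
    Fin.monotone_snoc_iff]
  simp only [Fin.forall_fin_add, Fin.forall_fin_succ', Fin.append_left, Fin.append_right,
    Fin.snoc_castSucc, Fin.snoc_last, Nat.cast_one, div_one]
  constructor
  · rintro ⟨⟨⟨hf, hfm⟩, hg, -, hmg⟩, ⟨hbda, hm0, hmc⟩, hbdb⟩
    refine ⟨hm0, hmc, (mem_smul_lectureHall_iff hs hm0).2 ⟨hf, fun i => ⟨(hbda i).1, hfm i⟩⟩,
      (mem_smul_lectureHall_iff ht (sub_nonneg.2 hmc)).2 ⟨?_, fun j => ?_⟩⟩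
    · simp only [hsub]
      exact fun i j hij => sub_le_sub_right (hg hij) m
    · simp only [hsub]
      constructor <;> linarith [hmg j, (hbdb j).2]
  · rintro ⟨hm0, hmc, ha, hb⟩
    rw [mem_smul_lectureHall_iff hs hm0] at ha
    rw [mem_smul_lectureHall_iff ht (sub_nonneg.2 hmc)] at hb
    simp only [hsub] at hb
    obtain ⟨hf, hbda⟩ := ha
    obtain ⟨hg, hbdb⟩ := hb
    have hmg : ∀ j, m ≤ b j / t j := fun j => by linarith [(hbdb j).1]
    refine ⟨⟨⟨hf, fun i => (hbda i).2⟩, fun i j hij => by simpa using hg hij,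
      fun i j => (hbda i).2.trans (hmg j), hmg⟩,
      ⟨fun i => ⟨(hbda i).1, (hbda i).2.trans hmc⟩, hm0, hmc⟩, fun j => ?_⟩
    constructor <;> linarith [hmg j, (hbdb j).2]

theorem append_snoc_one_mem_lectureHall (hs : ∀ i, 0 < s i) (ht : ∀ j, 0 < t j)
    {a : Fin d → ℤ} (ha : Int.cast ∘ a ∈ lectureHall d s) :
    Int.cast ∘ Fin.append (Fin.snoc a 1) (fun j => (t j : ℤ)) ∈
      lectureHall (d + 1 + e) (Fin.append (Fin.snoc s 1) t) := by
  rw [Fin.comp_append, Fin.comp_snoc, Int.cast_one, ← one_smul ℝ (lectureHall _ _),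
    append_snoc_mem_smul_lectureHall_iff hs ht zero_le_one, sub_self,
    Set.zero_smul_set ⟨0, zero_mem_lectureHall e t⟩, one_smul]
  exact ⟨zero_le_one, le_rfl, ha, funext fun j => by simp⟩

theorem append_snoc_zero_mem_lectureHall (hs : ∀ i, 0 < s i) (ht : ∀ j, 0 < t j)
    {b : Fin e → ℤ} (hb : Int.cast ∘ b ∈ lectureHall e t) :
    Int.cast ∘ Fin.append (Fin.snoc 0 0) b ∈
      lectureHall (d + 1 + e) (Fin.append (Fin.snoc s 1) t) := by
  rw [Fin.comp_append, Fin.comp_snoc, Int.cast_zero, ← one_smul ℝ (lectureHall _ _),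
    append_snoc_mem_smul_lectureHall_iff hs ht zero_le_one, sub_zero,
    Set.zero_smul_set ⟨0, zero_mem_lectureHall d s⟩, one_smul]
  exact ⟨le_rfl, zero_le_one, funext fun i => by simp, by simpa [Function.comp_def] using hb⟩

end Concatenation

theorem stmt_18_general (d e : ℕ)
    (s : Fin d → ℕ) (t : Fin e → ℕ) (hs : ∀ i, 0 < s i) (ht : ∀ j, 0 < t j)
    (hidps : HasIDP d (lectureHall d s))
    (hidpt : HasIDP e (lectureHall e t)) :
    HasIDP (d + 1 + e) (lectureHall (d + 1 + e) (Fin.append (Fin.snoc s 1) t)) := by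
  intro k hk z hz
  obtain ⟨a, m, b, rfl⟩ : ∃ a m b, z = Fin.append (Fin.snoc a m) b :=
    ⟨_, _, _, by rw [Fin.snoc_init_self, Fin.append_castAdd_natAdd]⟩
  change Int.cast ∘ _ ∈ _ at hz
  rw [Fin.comp_append, Fin.comp_snoc,
    append_snoc_mem_smul_lectureHall_iff hs ht k.cast_nonneg] at hz
  obtain ⟨hm0, hmk, ha, hb⟩ := hz
  lift m to ℕ using (by exact_mod_cast hm0)
  obtain ⟨r, rfl⟩ := Nat.exists_eq_add_of_le (by exact_mod_cast hmk : m ≤ k)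
  obtain ⟨xs, hxs, rfl⟩ := hidps.exists_sum_eq m a (by simpa using ha)
  obtain ⟨xt, hxt, hsum⟩ := hidpt.exists_sum_eq r (fun j => b j - m * t j) (by
    convert hb using 2 <;> simp)
  refine ⟨Fin.append (fun j => Fin.append (Fin.snoc (xs j) 1) (fun j => (t j : ℤ)))
    (fun l => Fin.append (Fin.snoc 0 0) (xt l)), fun j => ?_, fun i => ?_⟩
  · induction j using Fin.addCases with
    | left j => rw [Fin.append_left]; exact append_snoc_one_mem_lectureHall hs ht (hxs j)
    | right l => rw [Fin.append_right]; exact append_snoc_zero_mem_lectureHall hs ht (hxt l)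
  · rw [Fin.sum_univ_add]
    induction i using Fin.addCases with
    | left i => induction i using Fin.lastCases <;> simp [Finset.sum_apply]
    | right j =>
      have hj := congrFun hsum j
      simp only [Finset.sum_apply] at hj
      simp [hj]

/-- if `P_d^(s)` and `P_e^(t)` satisfy the integer decomposition
property, then so does the lecture hall polytope of the concatenated sequence
`(s_1, …, s_d, 1, t_1, …, t_e)`. -/
theorem stmt_18 (d e : ℕ) (hd : 0 < d) (he : 0 < e)
    (s : Fin d → ℕ) (t : Fin e → ℕ) (hs : ∀ i, 0 < s i) (ht : ∀ j, 0 < t j)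
    (hidps : HasIDP d (lectureHall d s))
    (hidpt : HasIDP e (lectureHall e t)) :
    HasIDP (d + 1 + e) (lectureHall (d + 1 + e) (Fin.append (Fin.snoc s 1) t)) :=
  stmt_18_general d e s t hs ht hidps hidpt
end

section
/- Let d, e ≥ 1, let s = (s_1,…,s_d) and t = (t_1,…,t_e) be sequences of positive integers, let A = P_{d+1}^{(s_1,…,s_d,1)} ⊂ ℝ^{d+1} be the lecture hall polytope of the sequence (s_1,…,s_d,1), and let Q = P_e^{(t_e,…,t_1)} ⊂ ℝ^e be the lecture hall polytope of the reversed sequence (t_e,…,t_1). Then the lattice points of the free sum A ⊕ Q = conv((A × {0}) ∪ ({0} × Q)) ⊂ ℝ^{d+1+e} are exactly the images of the lattice points of A and of Q under the canonical injections: (A ⊕ Q) ∩ ℤ^{d+1+e} = ((A ∩ ℤ^{d+1}) × {0}) ∪ ({0} × (Q ∩ ℤ^e)). -/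
open Pointwise BigOperators

section LHaux

lemma lh_zero {n : ℕ} (σ : Fin n → ℕ) : (0 : Fin n → ℝ) ∈ lectureHall n σ := by
  refine ⟨fun h => ?_, fun i hi => ?_, fun h => ?_⟩ <;> simp

lemma lh_convex {n : ℕ} (σ : Fin n → ℕ) : Convex ℝ (lectureHall n σ) := by
  intro x hx y hy α β hα hβ hαβ
  obtain ⟨hx0, hxm, hxl⟩ := hx
  obtain ⟨hy0, hym, hyl⟩ := hy
  have key : ∀ (i : Fin n), (α • x + β • y) i / (σ i : ℝ)
      = α * (x i / (σ i : ℝ)) + β * (y i / (σ i : ℝ)) := by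
    intro i
    simp [add_div, mul_div_assoc, Pi.add_apply, Pi.smul_apply, smul_eq_mul]
  refine ⟨fun h => ?_, fun i hi => ?_, fun h => ?_⟩
  · rw [key]
    exact add_nonneg (mul_nonneg hα (hx0 h)) (mul_nonneg hβ (hy0 h))
  · rw [key, key]
    exact add_le_add (mul_le_mul_of_nonneg_left (hxm i hi) hα)
      (mul_le_mul_of_nonneg_left (hym i hi) hβ)
  · rw [key]
    calc α * (x _ / _) + β * (y _ / _) ≤ α * 1 + β * 1 :=
          add_le_add (mul_le_mul_of_nonneg_left (hxl h) hα)
            (mul_le_mul_of_nonneg_left (hyl h) hβ)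
      _ = 1 := by rw [mul_one, mul_one, hαβ]

lemma lh_chain {n : ℕ} (σ : Fin n → ℕ) {x : Fin n → ℝ}
    (hx : x ∈ lectureHall n σ) (i j : Fin n) (hij : i ≤ j) :
    x i / (σ i : ℝ) ≤ x j / (σ j : ℝ) := by
  obtain ⟨-, hm, -⟩ := hx
  have key : ∀ k : ℕ, ∀ i : Fin n, ∀ h : (i : ℕ) + k < n,
      x i / (σ i : ℝ) ≤ x ⟨(i : ℕ) + k, h⟩ / (σ ⟨(i : ℕ) + k, h⟩ : ℝ) := by
    intro k
    induction k with
    | zero => intro i h; simp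
    | succ k ih =>
        intro i h
        have h' : (i : ℕ) + k < n := by omega
        exact (ih i h').trans (hm ⟨(i : ℕ) + k, h'⟩ h)
  have hj : j = ⟨(i : ℕ) + ((j : ℕ) - (i : ℕ)), by omega⟩ := by
    ext; simp; omega
  rw [hj]
  exact key _ i _

/-- Left injection `x ↦ (x, 0)` as a linear map. -/
def lhInl (m k : ℕ) : (Fin m → ℝ) →ₗ[ℝ] (Fin (m + k) → ℝ) where
  toFun x := Fin.append x (0 : Fin k → ℝ)
  map_add' x y := by
    funext i
    refine Fin.addCases (fun i => ?_) (fun i => ?_) i <;>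
      simp [Fin.append_left, Fin.append_right]
  map_smul' c x := by
    funext i
    refine Fin.addCases (fun i => ?_) (fun i => ?_) i <;>
      simp [Fin.append_left, Fin.append_right]

/-- Right injection `y ↦ (0, y)` as a linear map. -/
def lhInr (m k : ℕ) : (Fin k → ℝ) →ₗ[ℝ] (Fin (m + k) → ℝ) where
  toFun y := Fin.append (0 : Fin m → ℝ) y
  map_add' x y := by
    funext i
    refine Fin.addCases (fun i => ?_) (fun i => ?_) i <;>
      simp [Fin.append_left, Fin.append_right]
  map_smul' c x := by
    funext i
    refine Fin.addCases (fun i => ?_) (fun i => ?_) i <;>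
      simp [Fin.append_left, Fin.append_right]

end LHaux

/-- with `A = P_{d+1}^{(s,1)}` and `Q = P_e^{(t_e, …, t_1)}`, the
lattice points of the free sum `A ⊕ Q` are exactly the images of the lattice
points of `A` and of `Q` under the canonical injections. -/
theorem stmt_19 (d e : ℕ) (hd : 0 < d) (he : 0 < e)
    (s : Fin d → ℕ) (t : Fin e → ℕ) (hs : ∀ i, 0 < s i) (ht : ∀ j, 0 < t j) :
    convexHull ℝ
        (((fun x : Fin (d + 1) → ℝ => Fin.append x (0 : Fin e → ℝ)) ''
            lectureHall (d + 1) (Fin.snoc s 1)) ∪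
         ((fun y : Fin e → ℝ => Fin.append (0 : Fin (d + 1) → ℝ) y) ''
            lectureHall e (fun j : Fin e => t (Fin.rev j)))) ∩
      latticePoints (d + 1 + e) =
    ((fun x : Fin (d + 1) → ℝ => Fin.append x (0 : Fin e → ℝ)) ''
        (lectureHall (d + 1) (Fin.snoc s 1) ∩ latticePoints (d + 1))) ∪
    ((fun y : Fin e → ℝ => Fin.append (0 : Fin (d + 1) → ℝ) y) ''
        (lectureHall e (fun j : Fin e => t (Fin.rev j)) ∩ latticePoints e)) := by

  have hA : Convex ℝ (lectureHall (d + 1) (Fin.snoc s 1)) := lh_convex _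
  have hQ : Convex ℝ (lectureHall e (fun j : Fin e => t (Fin.rev j))) := lh_convex _
  have hfL : (fun x : Fin (d + 1) → ℝ => Fin.append x (0 : Fin e → ℝ))
      = ⇑(lhInl (d + 1) e) := rfl
  have hfR : (fun y : Fin e → ℝ => Fin.append (0 : Fin (d + 1) → ℝ) y)
      = ⇑(lhInr (d + 1) e) := rfl
  have hσpos : ∀ j : Fin (d + 1), (0 : ℝ) < ((Fin.snoc s 1 : Fin (d + 1) → ℕ) j : ℝ) := by
    intro j
    refine Fin.lastCases ?_ (fun j => ?_) j
    · simp
    · simp only [Fin.snoc_castSucc]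
      exact_mod_cast hs j
  have hlastσ : ((Fin.snoc s 1 : Fin (d + 1) → ℕ) (Fin.last d) : ℝ) = 1 := by simp
  apply Set.Subset.antisymm
  · rintro z ⟨hz, hzLat⟩
    rw [hfL, hfR, convexHull_union (Set.Nonempty.image _ ⟨0, lh_zero _⟩)
        (Set.Nonempty.image _ ⟨0, lh_zero _⟩),
      ((hA.linear_image (lhInl (d + 1) e)).convexHull_eq),
      ((hQ.linear_image (lhInr (d + 1) e)).convexHull_eq), mem_convexJoin] at hz
    obtain ⟨u, ⟨a, ha, rfl⟩, v, ⟨q, hq, rfl⟩, lam, mu, hlam, hmu, hlm, heq⟩ := hz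
    have hzLat' : ∀ i, ∃ k : ℤ, z i = (k : ℝ) := hzLat
    have hInl_apply : ∀ x : Fin (d + 1) → ℝ,
        (lhInl (d + 1) e) x = Fin.append x (0 : Fin e → ℝ) := fun _ => rfl
    have hInr_apply : ∀ y : Fin e → ℝ,
        (lhInr (d + 1) e) y = Fin.append (0 : Fin (d + 1) → ℝ) y := fun _ => rfl
    have hzL : ∀ i : Fin (d + 1), z (Fin.castAdd e i) = lam * a i := by
      intro i
      rw [← heq]
      simp [hInl_apply, hInr_apply, Fin.append_left]
    have hzR : ∀ j : Fin e, z (Fin.natAdd (d + 1) j) = mu * q j := by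
      intro j
      rw [← heq]
      simp [hInl_apply, hInr_apply, Fin.append_right]
    have hzfun : z = Fin.append (fun i => lam * a i) (fun j => mu * q j) := by
      funext i
      refine Fin.addCases (fun i => ?_) (fun j => ?_) i
      · rw [Fin.append_left]; exact hzL i
      · rw [Fin.append_right]; exact hzR j
    by_cases hy : (fun j => mu * q j) = (0 : Fin e → ℝ)
    · left
      refine ⟨fun i => lam * a i, ⟨?_, ?_⟩, ?_⟩
      · have heq2 : (fun i => lam * a i) = lam • a + mu • (0 : Fin (d + 1) → ℝ) := by
          funext i; simp
        rw [heq2]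
        exact hA ha (lh_zero _) hlam hmu hlm
      · intro i
        obtain ⟨k, hk⟩ := hzLat' (Fin.castAdd e i)
        exact ⟨k, by show lam * a i = (k : ℝ); rw [← hzL i]; exact hk⟩
      · rw [hy] at hzfun
        exact hzfun.symm
    · right
      have hx0 : ∀ i, lam * a i = 0 := by
        by_contra hcon
        push_neg at hcon
        obtain ⟨i, hi⟩ := hcon
        have hlam0 : 0 < lam := lt_of_le_of_ne hlam (by rintro rfl; simp at hi)
        have hai : a i ≠ 0 := fun h => hi (by rw [h, mul_zero])
        obtain ⟨ha0, ham, halast⟩ := ha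
        have h0le : (⟨0, Nat.succ_pos d⟩ : Fin (d + 1)) ≤ i := by
          simp [Fin.le_def]
        have hnn : 0 ≤ a i / ((Fin.snoc s 1 : Fin (d + 1) → ℕ) i : ℝ) :=
          le_trans (ha0 (Nat.succ_pos d))
            (lh_chain _ ⟨ha0, ham, halast⟩ ⟨0, Nat.succ_pos d⟩ i h0le)
        have hpos_div : 0 < a i / ((Fin.snoc s 1 : Fin (d + 1) → ℕ) i : ℝ) :=
          hnn.lt_of_ne (Ne.symm (div_ne_zero hai (ne_of_gt (hσpos i))))
        have hle_last : a i / ((Fin.snoc s 1 : Fin (d + 1) → ℕ) i : ℝ)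
            ≤ a (Fin.last d) / ((Fin.snoc s 1 : Fin (d + 1) → ℕ) (Fin.last d) : ℝ) :=
          lh_chain _ ⟨ha0, ham, halast⟩ i (Fin.last d) (Fin.le_last i)
        rw [hlastσ, div_one] at hle_last
        have halast_pos : 0 < a (Fin.last d) := lt_of_lt_of_le hpos_div hle_last
        have h3 : a (Fin.last d) / ((Fin.snoc s 1 : Fin (d + 1) → ℕ) (Fin.last d) : ℝ) ≤ 1 :=
          halast (Nat.succ_pos d)
        rw [hlastσ, div_one] at h3
        obtain ⟨k, hk⟩ := hzLat' (Fin.castAdd e (Fin.last d))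
        rw [hzL (Fin.last d)] at hk
        have hk_pos : (0 : ℝ) < (k : ℝ) := by rw [← hk]; exact mul_pos hlam0 halast_pos
        have hk_pos' : (0 : ℤ) < k := by exact_mod_cast hk_pos
        have hk1 : (1 : ℝ) ≤ (k : ℝ) := by exact_mod_cast hk_pos'
        rw [← hk] at hk1
        have hle : lam * a (Fin.last d) ≤ lam * 1 :=
          mul_le_mul_of_nonneg_left h3 hlam
        have hmu0 : mu = 0 := by nlinarith
        apply hy
        funext j
        rw [hmu0, zero_mul]
        rfl
      refine ⟨fun j => mu * q j, ⟨?_, ?_⟩, ?_⟩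
      · have heq2 : (fun j => mu * q j) = mu • q + lam • (0 : Fin e → ℝ) := by
          funext j; simp
        rw [heq2]
        exact hQ hq (lh_zero _) hmu hlam (by linarith)
      · intro j
        obtain ⟨k, hk⟩ := hzLat' (Fin.natAdd (d + 1) j)
        exact ⟨k, by show mu * q j = (k : ℝ); rw [← hzR j]; exact hk⟩
      · have hx0' : (fun i => lam * a i) = (0 : Fin (d + 1) → ℝ) := funext fun i => hx0 i
        rw [hzfun, hx0']
  · rintro z (⟨a, ⟨haA, haL⟩, rfl⟩ | ⟨q, ⟨hqQ, hqL⟩, rfl⟩)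
    · refine ⟨subset_convexHull ℝ _ (Set.mem_union_left _ ⟨a, haA, rfl⟩), ?_⟩
      intro i
      refine Fin.addCases (fun i => ?_) (fun j => ?_) i
      · obtain ⟨k, hk⟩ := haL i
        exact ⟨k, by simpa [Fin.append_left] using hk⟩
      · exact ⟨0, by simp [Fin.append_right]⟩
    · refine ⟨subset_convexHull ℝ _ (Set.mem_union_right _ ⟨q, hqQ, rfl⟩), ?_⟩
      intro i
      refine Fin.addCases (fun i => ?_) (fun j => ?_) i
      · exact ⟨0, by simp [Fin.append_left]⟩
      · obtain ⟨k, hk⟩ := hqL j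
        exact ⟨k, by simpa [Fin.append_right] using hk⟩
end
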